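/- arXiv:2404.03530 — 5 statements merged into one kernel-verified Lean document; each statement's English description precedes it below -/
import Mathlib

section
/- Let R = K[x_1,...,x_n] be a polynomial ring over a field K, I a homogeneous ideal of R, and ≺ a graded monomial ordering. If R/I is Artinian with degree of regularity d_reg(I) = min{d : R_d = I_d}, then every element of the reduced Gröbner basis of I with respect to ≺ has degree at most d_reg(I). -/
open MvPolynomial

namespace GBPaper

/-- The dimension of the degree-`d` homogeneous piece of `R/I`,
where `R = K[x_i : i ∈ σ]`. -/
noncomputable def hilbertFn (K : Type*) [Field K] {σ : Type*}
    (I : Ideal (MvPolynomial σ K)) (d : ℕ) : ℕ :=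
  Module.finrank K
    ((MvPolynomial.homogeneousSubmodule σ K d).map
      (Ideal.Quotient.mkₐ K I).toLinearMap)

/-- An ideal is homogeneous iff it contains all homogeneous components of its elements. -/
def IsHomogeneousIdeal {K : Type*} [Field K] {σ : Type*}
    (I : Ideal (MvPolynomial σ K)) : Prop :=
  ∀ f ∈ I, ∀ d : ℕ, MvPolynomial.homogeneousComponent d f ∈ I

/-- The degree of regularity: the least `d` with `R_d = I_d`. -/
noncomputable def degReg (K : Type*) [Field K] {σ : Type*}
    (I : Ideal (MvPolynomial σ K)) : ℕ :=
  sInf {d : ℕ | ∀ f : MvPolynomial σ K, f.IsHomogeneous d → f ∈ I}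

/-- The generalized degree of regularity: the least `d₀` from which on the Hilbert
function of `R/I` is constant. -/
noncomputable def gdegReg (K : Type*) [Field K] {σ : Type*}
    (I : Ideal (MvPolynomial σ K)) : ℕ :=
  sInf {d₀ : ℕ | ∀ d : ℕ, d₀ ≤ d → hilbertFn K I d = hilbertFn K I d₀}

/-- The leading monomial (leading exponent) of a polynomial with respect to a
monomial order. -/
noncomputable def lm {K : Type*} [Field K] {σ : Type*} (m : MonomialOrder σ)
    (f : MvPolynomial σ K) : σ →₀ ℕ :=
  m.toSyn.symm (f.support.sup fun s => m.toSyn s)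

/-- A monomial order is graded (degree-compatible) if it refines total degree. -/
def MonIsGraded {σ : Type*} (m : MonomialOrder σ) : Prop :=
  ∀ a b : σ →₀ ℕ, a.degree < b.degree → m.toSyn a < m.toSyn b

/-- `G` is the reduced Gröbner basis of `I` with respect to the monomial order `m`. -/
structure IsReducedGB {K : Type*} [Field K] {σ : Type*} (m : MonomialOrder σ)
    (I : Ideal (MvPolynomial σ K)) (G : Finset (MvPolynomial σ K)) : Prop where
  subset : (G : Set (MvPolynomial σ K)) ⊆ I
  zero_not_mem : (0 : MvPolynomial σ K) ∉ G
  monic : ∀ g ∈ G, MvPolynomial.coeff (lm m g) g = 1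
  isGB : ∀ f ∈ I, f ≠ 0 → ∃ g ∈ G, lm m g ≤ lm m f
  reduced : ∀ g ∈ G, ∀ g' ∈ G, g ≠ g' → ∀ s ∈ g.support, ¬ lm m g' ≤ s

/-- The degree reverse lexicographic order with `x_0 ≻ x_1 ≻ ⋯`. -/
def IsDegRevLex {n : ℕ} (m : MonomialOrder (Fin n)) : Prop :=
  ∀ a b : Fin n →₀ ℕ, m.toSyn a < m.toSyn b ↔
    (a.degree < b.degree ∨
      (a.degree = b.degree ∧ ∃ i, b i < a i ∧ ∀ j, i < j → a j = b j))

/-- Restriction of an exponent vector on `n+1` variables to the first `n` variables. -/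
noncomputable def restr {n : ℕ} (a : Fin (n + 1) →₀ ℕ) : Fin n →₀ ℕ :=
  Finsupp.equivFunOnFinite.symm fun i => a i.castSucc

/-- Extension of an exponent vector on `n` variables to `n+1` variables (with
`y`-exponent `0`). -/
noncomputable def extX {n : ℕ} (a : Fin n →₀ ℕ) : Fin (n + 1) →₀ ℕ :=
  Finsupp.embDomain Fin.castSuccEmb a

/-- `m'` is the homogenization (w.r.t. the last variable `y`) of the graded
monomial order `m₀`: it compares first total degrees, then the `X`-parts using `m₀`. -/
def IsHomogenizationOrder {n : ℕ} (m' : MonomialOrder (Fin (n + 1)))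
    (m₀ : MonomialOrder (Fin n)) : Prop :=
  ∀ a b : Fin (n + 1) →₀ ℕ, m'.toSyn a < m'.toSyn b ↔
    (a.degree < b.degree ∨
      (a.degree = b.degree ∧ m₀.toSyn (restr a) < m₀.toSyn (restr b)))

/-- The top part (maximal total degree part) of a polynomial. -/
noncomputable def topPart {K : Type*} [Field K] {σ : Type*}
    (f : MvPolynomial σ K) : MvPolynomial σ K :=
  MvPolynomial.homogeneousComponent f.totalDegree f

/-- The homogenization of `f ∈ K[x_1,…,x_n]` by the extra (last) variable `y`. -/
noncomputable def homog {K : Type*} [Field K] {n : ℕ}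
    (f : MvPolynomial (Fin n) K) : MvPolynomial (Fin (n + 1)) K :=
  ∑ s ∈ f.support,
    MvPolynomial.monomial
      (extX s + Finsupp.single (Fin.last n) (f.totalDegree - s.degree))
      (f.coeff s)

/-- The last variable `y` used for homogenization. -/
noncomputable def yvar (K : Type*) [Field K] (n : ℕ) : MvPolynomial (Fin (n + 1)) K :=
  MvPolynomial.X (Fin.last n)

/-- Substituting `y = 0`, the "top part" of a homogeneous polynomial in `R[y]`. -/
noncomputable def setYZero {K : Type*} [Field K] {n : ℕ}
    (g : MvPolynomial (Fin (n + 1)) K) : MvPolynomial (Fin (n + 1)) K :=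
  MvPolynomial.aeval
    (fun i => if i = Fin.last n then 0 else MvPolynomial.X i) g

/-- The ideal generated by the polynomials `f j` for `j < i`. -/
noncomputable def prevIdeal {K : Type*} [Field K] {σ : Type*} {M : ℕ}
    (f : Fin M → MvPolynomial σ K) (i : Fin M) : Ideal (MvPolynomial σ K) :=
  Ideal.span (f '' {j | j < i})

/-- `d`-regularity of a sequence of homogeneous polynomials of degrees `dg`. -/
def IsDRegularSeq {K : Type*} [Field K] {σ : Type*} {M : ℕ}
    (f : Fin M → MvPolynomial σ K) (dg : Fin M → ℕ) (d : ℕ) : Prop :=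
  ∀ i : Fin M, ∀ g : MvPolynomial σ K, ∀ e : ℕ,
    g.IsHomogeneous e → e + dg i < d →
    g * f i ∈ prevIdeal f i → g ∈ prevIdeal f i

/-- Semi-regularity (Pardue): each multiplication map on graded pieces of the
successive quotients is injective or surjective. -/
def IsSemiRegularSeq {K : Type*} [Field K] {σ : Type*} {M : ℕ}
    (f : Fin M → MvPolynomial σ K) (dg : Fin M → ℕ) : Prop :=
  ∀ i : Fin M, ∀ t : ℕ, dg i ≤ t →
    (∀ g : MvPolynomial σ K, g.IsHomogeneous (t - dg i) →
        g * f i ∈ prevIdeal f i → g ∈ prevIdeal f i) ∨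
    (∀ h : MvPolynomial σ K, h.IsHomogeneous t →
        ∃ g : MvPolynomial σ K, g.IsHomogeneous (t - dg i) ∧
          h - g * f i ∈ prevIdeal f i)

/-- The power series `∏ (1 - z^{d_i}) / (1-z)^n` over `ℤ`. -/
noncomputable def semiRegSeries (n : ℕ) {M : ℕ} (dg : Fin M → ℕ) : PowerSeries ℤ :=
  (∏ i : Fin M, (1 - (PowerSeries.X : PowerSeries ℤ) ^ dg i)) *
    ((PowerSeries.invOneSubPow ℤ n : (PowerSeries ℤ)ˣ) : PowerSeries ℤ)

/-- The cutoff of the truncation `[·]`: the first index with a nonpositive coefficient. -/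
noncomputable def truncCutoff (P : PowerSeries ℤ) : ℕ :=
  sInf {t : ℕ | PowerSeries.coeff t P ≤ 0}

/-- The coefficient of `z^t` in the series `[P]` obtained by truncating `P` after
the last consecutive positive coefficient. -/
noncomputable def truncCoeff (P : PowerSeries ℤ) (t : ℕ) : ℤ :=
  if t < truncCutoff P then PowerSeries.coeff t P else 0

section Koszul

variable {K : Type*} [Field K] {σ : Type*} {M : ℕ}

/-- Index set of the degree-`i` part of the Koszul complex on `M` polynomials. -/
abbrev KIdx (M i : ℕ) := {s : Finset (Fin M) // s.card = i}

/-- The Koszul differential `K_{i+1} → K_i` of the Koszul complex on `f`. -/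
noncomputable def koszulD (f : Fin M → MvPolynomial σ K) (i : ℕ)
    (v : KIdx M (i + 1) → MvPolynomial σ K) :
    KIdx M i → MvPolynomial σ K :=
  fun t => ∑ j : Fin M,
    if h : j ∈ t.val then 0
    else ((-1 : MvPolynomial σ K) ^ (t.val.filter (fun l => l < j)).card) * f j *
      v ⟨insert j t.val, by rw [Finset.card_insert_of_notMem h, t.prop]⟩

/-- A Koszul `i`-chain is homogeneous of (internal) degree `d`: each component at a
subset `s` is homogeneous of degree `d - ∑_{j ∈ s} dg j` (and zero if `d` is smaller
than this shift). -/
def KChainHom (dg : Fin M → ℕ) (i : ℕ)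
    (v : KIdx M i → MvPolynomial σ K) (d : ℕ) : Prop :=
  ∀ t : KIdx M i,
    (v t).IsHomogeneous (d - ∑ j ∈ t.val, dg j) ∧
    (d < ∑ j ∈ t.val, dg j → v t = 0)

/-- A Koszul `i`-cycle: an `i`-chain killed by the Koszul differential
(every `0`-chain is a cycle). -/
def IsKCycle (f : Fin M → MvPolynomial σ K) :
    (i : ℕ) → (KIdx M i → MvPolynomial σ K) → Prop
  | 0, _ => True
  | (i + 1), v => koszulD f i v = 0

/-- The degree-`d` part of the `i`-th Koszul homology of `f` vanishes:
every homogeneous cycle of degree `d` is a boundary. -/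
def KoszulHVanish (f : Fin M → MvPolynomial σ K) (dg : Fin M → ℕ)
    (i d : ℕ) : Prop :=
  ∀ v : KIdx M i → MvPolynomial σ K, KChainHom dg i v d → IsKCycle f i v →
    ∃ w : KIdx M (i + 1) → MvPolynomial σ K, koszulD f i w = v

/-- The sum `∑ v_j f_j` of which syzygies are the kernel. -/
noncomputable def syzSum (f v : Fin M → MvPolynomial σ K) : MvPolynomial σ K :=
  ∑ j : Fin M, v j * f j

/-- The module of trivial (Koszul) syzygies of `f`. -/
noncomputable def trivSyz (f : Fin M → MvPolynomial σ K) :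
    Submodule (MvPolynomial σ K) (Fin M → MvPolynomial σ K) :=
  Submodule.span (MvPolynomial σ K)
    {w | ∃ i j : Fin M, i < j ∧ w = Pi.single j (f i) - Pi.single i (f j)}

/-- A tuple `v` is homogeneous of degree `e` as an element of `⊕ R(-dg j)`. -/
def TupleHom (dg : Fin M → ℕ) (v : Fin M → MvPolynomial σ K) (e : ℕ) : Prop :=
  ∀ j : Fin M, (v j).IsHomogeneous (e - dg j) ∧ (e < dg j → v j = 0)

end Koszul

end GBPaper

namespace GBPaper

/-- The top part `h|_{y=0}` of a homogeneous polynomial in `R' = R[y]`,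
viewed as an element of `R = K[x_1,…,x_n]`. -/
noncomputable def topPartR {K : Type*} [Field K] {n : ℕ}
    (g : MvPolynomial (Fin (n + 1)) K) : MvPolynomial (Fin n) K :=
  MvPolynomial.aeval (Fin.lastCases 0 fun i => MvPolynomial.X i) g

end GBPaper

/-!
A monomial `x^s` of degree above `d_reg(I)` has a proper divisor `x^t` of degree exactly
`d_reg(I)`, and `x^t ∈ I`. So `x^t` is divisible by the leading monomial of some `g' ∈ G`.
If `x^s` occurred in `g ∈ G`, then either `g' ≠ g` and `x^s` would not be reduced with respect
to `g'`, or `g' = g` and `lm g ∣ x^t` would put `x^s` strictly above the leading monomial of `g`.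
-/

namespace GBPaper

variable {K : Type*} [Field K] {σ : Type*}

theorem lm_monomial_one (m : MonomialOrder σ) (s : σ →₀ ℕ) :
    lm m (monomial s (1 : K)) = s := by
  classical
  simp [lm, support_monomial]

theorem toSyn_le_toSyn_lm (m : MonomialOrder σ) {f : MvPolynomial σ K} {s : σ →₀ ℕ}
    (hs : s ∈ f.support) : m.toSyn s ≤ m.toSyn (lm m f) := by
  rw [lm, AddEquiv.apply_symm_apply]
  exact Finset.le_sup hs

theorem exists_lt_monomial_mem {I : Ideal (MvPolynomial σ K)} {D : ℕ}
    (hD : ∀ f : MvPolynomial σ K, f.IsHomogeneous D → f ∈ I) {s : σ →₀ ℕ}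
    (hs : D < s.degree) : ∃ t < s, monomial t (1 : K) ∈ I := by
  obtain ⟨t, hts, htD⟩ := s.exists_le_degree_eq D hs.le
  refine ⟨t, hts.lt_of_ne ?_, hD _ (isHomogeneous_monomial _ htD)⟩
  rintro rfl
  exact hs.ne htD.symm

namespace IsReducedGB

variable {m : MonomialOrder σ} {I : Ideal (MvPolynomial σ K)} {G : Finset (MvPolynomial σ K)}
  {g : MvPolynomial σ K}

theorem monomial_notMem_of_lt (hG : IsReducedGB m I G) (hg : g ∈ G) {s t : σ →₀ ℕ}
    (hs : s ∈ g.support) (hts : t < s) : monomial t (1 : K) ∉ I := by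
  intro ht
  obtain ⟨g', hg', hle⟩ := hG.isGB _ ht (monomial_eq_zero.not.mpr one_ne_zero)
  rw [lm_monomial_one] at hle
  by_cases hgg : g' = g
  · subst hgg
    have := calc
      m.toSyn (lm m g') ≤ m.toSyn t := m.toSyn_monotone hle
      _ < m.toSyn s := m.toSyn_strictMono hts
      _ ≤ m.toSyn (lm m g') := toSyn_le_toSyn_lm m hs
    exact this.false
  · exact hG.reduced g hg g' hg' (Ne.symm hgg) s hs (hle.trans hts.le)

theorem degree_le_of_mem_support (hG : IsReducedGB m I G) {D : ℕ}
    (hD : ∀ f : MvPolynomial σ K, f.IsHomogeneous D → f ∈ I) (hg : g ∈ G) {s : σ →₀ ℕ}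
    (hs : s ∈ g.support) : s.degree ≤ D := by
  by_contra! h
  obtain ⟨t, hts, ht⟩ := exists_lt_monomial_mem hD h
  exact hG.monomial_notMem_of_lt hg hs hts ht

theorem totalDegree_le (hG : IsReducedGB m I G) {D : ℕ}
    (hD : ∀ f : MvPolynomial σ K, f.IsHomogeneous D → f ∈ I) (hg : g ∈ G) :
    g.totalDegree ≤ D :=
  Finset.sup_le fun _ hs => hG.degree_le_of_mem_support hD hg hs

end IsReducedGB

end GBPaper

open GBPaper

theorem stmt0_general {K : Type*} [Field K] {n : ℕ}
    (I : Ideal (MvPolynomial (Fin n) K))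
    (hArt : ∃ d : ℕ, ∀ f : MvPolynomial (Fin n) K, f.IsHomogeneous d → f ∈ I)
    (m : MonomialOrder (Fin n))
    (G : Finset (MvPolynomial (Fin n) K)) (hG : IsReducedGB m I G) :
    ∀ g ∈ G, g.totalDegree ≤ degReg K I := fun _ hg =>
  hG.totalDegree_le (Nat.sInf_mem hArt) hg

/-- every element of the reduced Gröbner basis of a homogeneous ideal
`I` with Artinian quotient, w.r.t. a graded monomial ordering, has degree at most
the degree of regularity of `I`. -/
theorem stmt0 {K : Type*} [Field K] {n : ℕ}
    (I : Ideal (MvPolynomial (Fin n) K))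
    (hIhom : IsHomogeneousIdeal I)
    (hArt : ∃ d : ℕ, ∀ f : MvPolynomial (Fin n) K, f.IsHomogeneous d → f ∈ I)
    (m : MonomialOrder (Fin n)) (hm : MonIsGraded m)
    (G : Finset (MvPolynomial (Fin n) K)) (hG : IsReducedGB m I G) :
    ∀ g ∈ G, g.totalDegree ≤ degReg K I :=
  stmt0_general I hArt m G hG
end

section
/- Let R' = K[x_1,...,x_n,y] and let I be a homogeneous ideal of R'. Let ≺' be the homogenization (with respect to y) of a graded monomial ordering on K[x_1,...,x_n]. Suppose d_0 is a positive integer such that the multiplication-by-y map (R'/I)_{d_0-1} → (R'/I)_{d_0} is surjective, and for every d ≥ d_0 the multiplication-by-y map (R'/I)_d → (R'/I)_{d+1} is injective. Then every element of the reduced Gröbner basis of I with respect to ≺' has degree at most d_0. -/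
open MvPolynomial

open GBPaper

/-!
Let `g` be in the reduced Gröbner basis with `deg g = d > d₀`. Since `I` is homogeneous and the
order is graded, reducedness forces `g` to be homogeneous. For the homogenized order, among
monomials of one degree those with a smaller power of `y` are larger; so if `y` divides `lm g`,
it divides every monomial of `g`, and `g = y p` with `p ∈ I` by injectivity in degree `d - 1`.
Otherwise `lm g = x_i t` with `y ∤ t`, and surjectivity (propagated from degree `d₀` to
`d - 1`) gives `t - y b ∈ I`, whose leading monomial is `t`. Either way an element of `I` of
degree `< d` has leading monomial dividing a monomial of `g`, contradicting reducedness.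
-/
namespace GBPaper

section General

variable {R : Type*} [CommSemiring R] {σ : Type*}

theorem isHomogeneous_iff_forall_mem_support {f : MvPolynomial σ R} {d : ℕ} :
    f.IsHomogeneous d ↔ ∀ s ∈ f.support, s.degree = d := by
  simp only [IsHomogeneous, IsWeightedHomogeneous, mem_support_iff,
    Finsupp.degree_eq_weight_one]
  rfl

theorem X_dvd_of_forall_mem_support {f : MvPolynomial σ R} {i : σ}
    (h : ∀ s ∈ f.support, s i ≠ 0) : X i ∣ f := by
  classical
  rw [X_dvd_iff_modMonomial_eq_zero]
  ext s
  by_cases hs : Finsupp.single i 1 ≤ s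
  · exact coeff_modMonomial_of_le f hs
  · rw [coeff_modMonomial_of_not_le f hs, coeff_zero]
    by_contra hfs
    exact hs (Finsupp.single_le_iff.mpr
      (Nat.one_le_iff_ne_zero.mpr (h s (mem_support_iff.mpr hfs))))

theorem exists_eq_single_add {s : σ →₀ ℕ} {i : σ} (hi : s i ≠ 0) :
    ∃ t, s = Finsupp.single i 1 + t :=
  ⟨s - Finsupp.single i 1,
    (add_tsub_cancel_of_le (Finsupp.single_le_iff.mpr (Nat.one_le_iff_ne_zero.mpr hi))).symm⟩

end General

theorem exists_monomial_sub_mul_mem {R σ : Type*} [CommRing R] (I : Ideal (MvPolynomial σ R))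
    (y : MvPolynomial σ R) {d₀ : ℕ} (hd₀ : 0 < d₀)
    (hsurj : ∀ f : MvPolynomial σ R, f.IsHomogeneous d₀ →
      ∃ g : MvPolynomial σ R, g.IsHomogeneous (d₀ - 1) ∧ f - y * g ∈ I)
    {s : σ →₀ ℕ} (hs : d₀ ≤ s.degree) :
    ∃ b : MvPolynomial σ R, b.IsHomogeneous (s.degree - 1) ∧ monomial s 1 - y * b ∈ I := by
  suffices ∀ k, d₀ ≤ k → ∀ s : σ →₀ ℕ, s.degree = k →
      ∃ b : MvPolynomial σ R, b.IsHomogeneous (k - 1) ∧ monomial s 1 - y * b ∈ I from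
    this _ hs s rfl
  intro k hk
  induction k, hk using Nat.le_induction with
  | base => exact fun s hs => hsurj _ (isHomogeneous_monomial 1 hs)
  | succ k _ ih =>
    intro s hs
    obtain ⟨i, hi⟩ : ∃ i, s i ≠ 0 := by
      by_contra! h0
      rw [show s = 0 from Finsupp.ext h0, map_zero] at hs
      omega
    obtain ⟨t, rfl⟩ := exists_eq_single_add hi
    rw [map_add, Finsupp.degree_single] at hs
    obtain ⟨b, hb, hbI⟩ := ih t (by omega)
    refine ⟨X i * b, ?_, ?_⟩
    · convert (isHomogeneous_X R i).mul hb using 1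
      omega
    · have hfactor : monomial (Finsupp.single i 1 + t) 1 - y * (X i * b) =
          X i * (monomial t 1 - y * b) := by
        rw [monomial_single_add, pow_one]
        ring
      exact hfactor ▸ I.mul_mem_left _ hbI

section GroebnerBasis

variable {K : Type*} [Field K] {σ : Type*} {m : MonomialOrder σ}

theorem lm_eq_degree (m : MonomialOrder σ) (f : MvPolynomial σ K) : lm m f = m.degree f := rfl

theorem MonIsGraded.degree_lm (hm : MonIsGraded m) (f : MvPolynomial σ K) :
    (lm m f).degree = f.totalDegree := by
  rcases eq_or_ne f 0 with rfl | hf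
  · simp [lm_eq_degree]
  obtain ⟨s, hs, hsup⟩ := Finset.exists_mem_eq_sup f.support (support_nonempty.mpr hf)
    Finsupp.degree
  refine le_antisymm (le_totalDegree (m.degree_mem_support hf)) ?_
  by_contra! hlt
  exact (m.le_degree hs).not_gt (hm _ _ (hlt.trans_eq hsup))

variable {I : Ideal (MvPolynomial σ K)} {G : Finset (MvPolynomial σ K)} {g : MvPolynomial σ K}

theorem IsReducedGB.ne_zero (hG : IsReducedGB m I G) (hg : g ∈ G) : g ≠ 0 :=
  fun h => hG.zero_not_mem (h ▸ hg)

theorem IsReducedGB.not_lm_le_of_degree_lt (hG : IsReducedGB m I G) (hg : g ∈ G)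
    {f : MvPolynomial σ K} (hf : f ∈ I) (hf0 : f ≠ 0)
    (hdeg : (lm m f).degree < (lm m g).degree) {s : σ →₀ ℕ} (hs : s ∈ g.support) :
    ¬ lm m f ≤ s := by
  intro hle
  obtain ⟨g', hg', hg'f⟩ := hG.isGB f hf hf0
  rcases eq_or_ne g g' with rfl | hne
  · exact (Finsupp.degree_mono hg'f).not_gt hdeg
  · exact hG.reduced g hg g' hg' hne s hs (hg'f.trans hle)

theorem IsReducedGB.isHomogeneous (hm : MonIsGraded m) (hI : IsHomogeneousIdeal I)
    (hG : IsReducedGB m I G) (hg : g ∈ G) : g.IsHomogeneous g.totalDegree := by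
  rw [isHomogeneous_iff_forall_mem_support]
  intro s hs
  by_contra hne
  set h := homogeneousComponent s.degree g
  have hsupp : ∀ t ∈ h.support, t ∈ g.support ∧ t.degree = s.degree := by
    intro t ht
    rw [mem_support_iff, coeff_homogeneousComponent] at ht
    split_ifs at ht with htd
    · exact ⟨mem_support_iff.mpr ht, htd⟩
    · exact absurd rfl ht
  have hh0 : h ≠ 0 := by
    refine ne_zero_iff.mpr ⟨s, ?_⟩
    rwa [coeff_homogeneousComponent, if_pos rfl, ← mem_support_iff]
  obtain ⟨hlm_mem, hlm_deg⟩ := hsupp _ (m.degree_mem_support hh0)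
  refine hG.not_lm_le_of_degree_lt hg (hI g (hG.subset hg) _) hh0 ?_ hlm_mem le_rfl
  rw [hm.degree_lm g]
  exact hlm_deg.trans_lt ((le_totalDegree hs).lt_of_ne hne)

end GroebnerBasis

section Homogenization

variable {K : Type*} [Field K] {n : ℕ} {m' : MonomialOrder (Fin (n + 1))}
  {m₀ : MonomialOrder (Fin n)}

theorem degree_restr_add_last (a : Fin (n + 1) →₀ ℕ) :
    (restr a).degree + a (Fin.last n) = a.degree := by
  rw [Finsupp.degree_eq_sum, Finsupp.degree_eq_sum, Fin.sum_univ_castSucc]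
  rfl

theorem IsHomogenizationOrder.monIsGraded (hm' : IsHomogenizationOrder m' m₀) :
    MonIsGraded m' :=
  fun a b h => (hm' a b).mpr (Or.inl h)

/-- Among monomials of equal degree, a higher power of `y` leaves less room for the `x`-part. -/
theorem IsHomogenizationOrder.toSyn_lt_of_last_lt (hm₀ : MonIsGraded m₀)
    (hm' : IsHomogenizationOrder m' m₀) {a b : Fin (n + 1) →₀ ℕ} (hab : a.degree = b.degree)
    (hlast : a (Fin.last n) < b (Fin.last n)) : m'.toSyn b < m'.toSyn a := by
  have ha := degree_restr_add_last a
  have hb := degree_restr_add_last b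
  exact (hm' b a).mpr (Or.inr ⟨hab.symm, hm₀ _ _ (by omega)⟩)

theorem IsHomogenizationOrder.yvar_dvd_of_lm_last_ne_zero (hm₀ : MonIsGraded m₀)
    (hm' : IsHomogenizationOrder m' m₀) {g : MvPolynomial (Fin (n + 1)) K} {d : ℕ}
    (hg : g.IsHomogeneous d) (hlm : lm m' g (Fin.last n) ≠ 0) : yvar K n ∣ g := by
  have hg0 : g ≠ 0 := by
    rintro rfl
    simp [lm_eq_degree] at hlm
  rw [isHomogeneous_iff_forall_mem_support] at hg
  refine X_dvd_of_forall_mem_support fun s hs hs0 => (m'.le_degree hs).not_gt ?_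
  exact hm'.toSyn_lt_of_last_lt hm₀ ((hg s hs).trans (hg _ (m'.degree_mem_support hg0)).symm)
    (by rw [hs0]; exact Nat.pos_of_ne_zero hlm)

theorem IsHomogenizationOrder.lm_monomial_sub_yvar_mul (hm₀ : MonIsGraded m₀)
    (hm' : IsHomogenizationOrder m' m₀) {s : Fin (n + 1) →₀ ℕ} (hs : s (Fin.last n) = 0)
    (hs0 : 0 < s.degree) {b : MvPolynomial (Fin (n + 1)) K}
    (hb : b.IsHomogeneous (s.degree - 1)) :
    lm m' (monomial s (1 : K) - yvar K n * b) = s := by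
  classical
  have hmono : m'.degree (monomial s (1 : K)) = s := by simp [m'.degree_monomial]
  rw [lm_eq_degree, m'.degree_sub_of_lt, hmono]
  rw [hmono, m'.degree_lt_iff (hm'.monIsGraded _ _ (by simpa using hs0))]
  intro c hc
  simp only [yvar, support_X_mul, Finset.mem_map, addLeftEmbedding_apply] at hc
  obtain ⟨u, hu, rfl⟩ := hc
  refine hm'.toSyn_lt_of_last_lt hm₀ ?_ (by simp [hs])
  rw [map_add, Finsupp.degree_single, isHomogeneous_iff_forall_mem_support.mp hb u hu]
  omega

variable {I : Ideal (MvPolynomial (Fin (n + 1)) K)} {G : Finset (MvPolynomial (Fin (n + 1)) K)}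
  {g : MvPolynomial (Fin (n + 1)) K}

theorem IsReducedGB.lm_last_eq_zero (hm₀ : MonIsGraded m₀) (hm' : IsHomogenizationOrder m' m₀)
    (hI : IsHomogeneousIdeal I) (hG : IsReducedGB m' I G) (hg : g ∈ G)
    (hinj : ∀ f : MvPolynomial (Fin (n + 1)) K,
      f.IsHomogeneous (g.totalDegree - 1) → yvar K n * f ∈ I → f ∈ I) :
    lm m' g (Fin.last n) = 0 := by
  by_contra hlm
  have hghom := hG.isHomogeneous hm'.monIsGraded hI hg
  have hgdeg := hm'.monIsGraded.degree_lm g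
  obtain ⟨p, rfl⟩ := hm'.yvar_dvd_of_lm_last_ne_zero hm₀ hghom hlm
  have hp0 : p ≠ 0 := by
    rintro rfl
    exact hG.ne_zero hg (mul_zero _)
  have hshift : ∀ t ∈ p.support, Finsupp.single (Fin.last n) 1 + t ∈ (yvar K n * p).support := by
    intro t ht
    rwa [mem_support_iff, yvar, coeff_X_mul, ← mem_support_iff]
  have hpdeg : ∀ t ∈ p.support, t.degree + 1 = (yvar K n * p).totalDegree := by
    intro t ht
    rw [← isHomogeneous_iff_forall_mem_support.mp hghom _ (hshift t ht), map_add,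
      Finsupp.degree_single, add_comm]
  have hphom : p.IsHomogeneous ((yvar K n * p).totalDegree - 1) :=
    isHomogeneous_iff_forall_mem_support.mpr fun t ht => by have := hpdeg t ht; omega
  have hlmp := m'.degree_mem_support hp0
  refine hG.not_lm_le_of_degree_lt hg (hinj p hphom (hG.subset hg)) hp0 ?_ (hshift _ hlmp)
    le_add_self
  have := hpdeg (lm m' p) hlmp
  omega

theorem IsReducedGB.lm_last_ne_zero (hm₀ : MonIsGraded m₀) (hm' : IsHomogenizationOrder m' m₀)
    (hG : IsReducedGB m' I G) {d₀ : ℕ} (hd₀ : 0 < d₀)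
    (hsurj : ∀ f : MvPolynomial (Fin (n + 1)) K, f.IsHomogeneous d₀ →
      ∃ g : MvPolynomial (Fin (n + 1)) K, g.IsHomogeneous (d₀ - 1) ∧ f - yvar K n * g ∈ I)
    (hg : g ∈ G) (hgt : d₀ < g.totalDegree) :
    lm m' g (Fin.last n) ≠ 0 := by
  intro hlm
  have hgdeg := hm'.monIsGraded.degree_lm g
  obtain ⟨i, hi⟩ : ∃ i, lm m' g i ≠ 0 := by
    by_contra! h0
    rw [show lm m' g = 0 from Finsupp.ext h0, map_zero] at hgdeg
    omega
  obtain ⟨t, ht⟩ := exists_eq_single_add hi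
  have ht_last : t (Fin.last n) = 0 := by
    rw [ht, Finsupp.add_apply] at hlm
    exact (Nat.add_eq_zero_iff.mp hlm).2
  have ht_deg : t.degree + 1 = g.totalDegree := by
    rw [← hgdeg, ht, map_add, Finsupp.degree_single, add_comm]
  obtain ⟨b, hb, hbI⟩ := exists_monomial_sub_mul_mem I (yvar K n) hd₀ hsurj (s := t) (by omega)
  have hlmf := hm'.lm_monomial_sub_yvar_mul hm₀ ht_last (by omega) hb
  have hf0 : monomial t (1 : K) - yvar K n * b ≠ 0 := by
    intro h0
    rw [h0, lm_eq_degree, m'.degree_zero] at hlmf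
    rw [← hlmf, map_zero] at ht_deg
    omega
  refine hG.not_lm_le_of_degree_lt hg hbI hf0 ?_ (m'.degree_mem_support (hG.ne_zero hg)) ?_
  · rw [hlmf, hgdeg]
    omega
  · change lm m' _ ≤ lm m' g
    rw [hlmf, ht]
    exact le_add_self

end Homogenization

end GBPaper

/-- if multiplication by `y` on `R'/I` is surjective in degree `d₀`
and injective in all degrees `≥ d₀`, then the reduced Gröbner basis of `I` with
respect to a homogenized graded monomial ordering lives in degrees `≤ d₀`. -/
theorem stmt1 {K : Type*} [Field K] {n : ℕ}
    (I : Ideal (MvPolynomial (Fin (n + 1)) K))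
    (hIhom : IsHomogeneousIdeal I)
    (m' : MonomialOrder (Fin (n + 1))) (m₀ : MonomialOrder (Fin n))
    (hm₀ : MonIsGraded m₀) (hm' : IsHomogenizationOrder m' m₀)
    (d₀ : ℕ) (hd₀ : 0 < d₀)
    (hsurj : ∀ f : MvPolynomial (Fin (n + 1)) K, f.IsHomogeneous d₀ →
      ∃ g : MvPolynomial (Fin (n + 1)) K, g.IsHomogeneous (d₀ - 1) ∧
        f - yvar K n * g ∈ I)
    (hinj : ∀ d : ℕ, d₀ ≤ d → ∀ f : MvPolynomial (Fin (n + 1)) K,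
      f.IsHomogeneous d → yvar K n * f ∈ I → f ∈ I)
    (G : Finset (MvPolynomial (Fin (n + 1)) K)) (hG : IsReducedGB m' I G) :
    ∀ g ∈ G, g.totalDegree ≤ d₀ := by
  intro g hg
  by_contra! hgt
  exact hG.lm_last_ne_zero hm₀ hm' hd₀ hsurj hg hgt
    (hG.lm_last_eq_zero hm₀ hm' hIhom hg (hinj _ (by omega)))
end

section
/- Let f_1,...,f_m be homogeneous polynomials of positive degrees d_1,...,d_m in R = K[x_1,...,x_n] and let d ≥ max{d_i}. The sequence (f_1,...,f_m) is d-regular (i.e., for each i, the multiplication map by f_i from (R/⟨f_1,...,f_{i-1}⟩)_{t-d_i} to (R/⟨f_1,...,f_{i-1}⟩)_t is injective for all t with d_i ≤ t < d) if and only if the Hilbert series of R/⟨f_1,...,f_m⟩ is congruent to ∏_{j=1}^m (1-z^{d_j})/(1-z)^n modulo z^d. -/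
open MvPolynomial

/-!
Adding a homogeneous generator `f` of degree `e` to a homogeneous ideal `J` changes the Hilbert
function by `HF_{J+(f)}(t) = HF_J(t) - HF_J(t-e) + κ(t-e)`, where `κ(s) ≥ 0` is the dimension of
the kernel of multiplication by `f` on `(R/J)_s`; the coefficients of `∏_{j<k} (1-z^{d_j})/(1-z)^n`
obey the same recursion with `κ = 0`. Hence, for a `d`-regular sequence, the defect between the
Hilbert function of `R/⟨f_j : j < k⟩` and these coefficients vanishes below `d`. Conversely, argue
by induction on the degree `t`: if all kernels vanish below `t`, the defects in degree `t` increase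
with `k` (because `d_j > 0`) from `0` to `0`, so every step is an equality, which forces the kernels
in degree `t` to vanish.
-/

theorem Submodule.finrank_map_add_finrank_inf_ker {K V W : Type*} [Field K] [AddCommGroup V]
    [Module K V] [AddCommGroup W] [Module K W] (p : Submodule K V) [FiniteDimensional K p]
    (φ : V →ₗ[K] W) :
    Module.finrank K (p.map φ) + Module.finrank K (p ⊓ LinearMap.ker φ : Submodule K V) =
      Module.finrank K p := by
  have h := LinearMap.finrank_range_add_finrank_ker (φ.comp p.subtype)
  rw [LinearMap.range_comp, Submodule.range_subtype, LinearMap.ker_comp] at h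
  rwa [← (Submodule.comapSubtypeEquivOfLe (inf_le_left : p ⊓ LinearMap.ker φ ≤ p)).finrank_eq,
    Submodule.comap_inf, Submodule.comap_subtype_self, top_inf_eq]

theorem PowerSeries.coeff_invOneSubPow (n t : ℕ) :
    coeff t (invOneSubPow ℤ n : PowerSeries ℤ) = (n + t - 1).choose t := by
  rcases n with _ | n
  · rcases t with _ | t <;> simp [invOneSubPow_zero]
  · rw [invOneSubPow_val_succ_eq_mk_add_choose, coeff_mk, Nat.add_right_comm, Nat.add_sub_cancel,
      Nat.choose_symm_add]

theorem eq_of_le_succ_of_last_eq_first {α : Type*} [AddCommGroup α] [PartialOrder α]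
    [IsOrderedAddMonoid α] {a : ℕ → α} {M : ℕ} (hle : ∀ k < M, a k ≤ a (k + 1))
    (hend : a M = a 0) {k : ℕ} (hk : k < M) : a (k + 1) = a k := by
  have htel := Finset.sum_range_sub a M
  rw [hend, sub_self] at htel
  have hzero := (Finset.sum_eq_zero_iff_of_nonneg fun j hj =>
    sub_nonneg.mpr (hle j (Finset.mem_range.mp hj))).mp htel k (Finset.mem_range.mpr hk)
  exact sub_eq_zero.mp hzero

namespace MvPolynomial

variable {K σ : Type*} [Field K]

instance [Finite σ] (t : ℕ) : FiniteDimensional K (homogeneousSubmodule σ K t) :=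
  Module.Finite.iff_fg.mpr (homogeneousSubmodule_fg σ K t)

theorem finrank_homogeneousSubmodule [Fintype σ] (t : ℕ) :
    Module.finrank K (homogeneousSubmodule σ K t) = (Fintype.card σ + t - 1).choose t := by
  classical
  have hdeg : {d : σ →₀ ℕ | d.degree = t} = ↑((Finset.univ : Finset σ).finsuppAntidiag t) := by
    ext d
    simp [Finset.mem_finsuppAntidiag, Finsupp.degree_eq_sum]
  rw [homogeneousSubmodule_eq_finsupp_supported, ← Finset.card_univ,
    ← Finset.card_finsuppAntidiag_nat_eq_choose, hdeg,
    (AddMonoidAlgebra.supportedEquivFinsupp _).finrank_eq, Module.finrank_finsupp_self]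
  exact Fintype.card_coe _

end MvPolynomial

namespace GBPaper

attribute [local instance] MvPolynomial.gradedAlgebra

section GradedPieces

variable {K σ : Type*} [Field K]

local notation "V(" t ")" => homogeneousSubmodule σ K t

noncomputable def degreePart (I : Ideal (MvPolynomial σ K)) (t : ℕ) :
    Submodule K (MvPolynomial σ K) :=
  I.restrictScalars K ⊓ V(t)

def MulInjectiveInDegree (J : Ideal (MvPolynomial σ K)) (f : MvPolynomial σ K) (s : ℕ) : Prop :=
  ∀ g : MvPolynomial σ K, g.IsHomogeneous s → g * f ∈ J → g ∈ J

instance [Finite σ] (I : Ideal (MvPolynomial σ K)) (t : ℕ) :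
    FiniteDimensional K (degreePart I t) :=
  Submodule.finiteDimensional_of_le inf_le_right

theorem hilbertFn_add_finrank_degreePart [Finite σ] (I : Ideal (MvPolynomial σ K)) (t : ℕ) :
    hilbertFn K I t + Module.finrank K (degreePart I t) = Module.finrank K V(t) := by
  have hker : LinearMap.ker (Ideal.Quotient.mkₐ K I).toLinearMap = I.restrictScalars K := by
    ext x
    exact Ideal.Quotient.eq_zero_iff_mem
  rw [hilbertFn, degreePart, inf_comm, ← hker]
  exact Submodule.finrank_map_add_finrank_inf_ker _ _

theorem map_mulRight_le {f : MvPolynomial σ K} {e t : ℕ} (hf : f.IsHomogeneous e)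
    (het : e ≤ t) : V(t - e).map (LinearMap.mulRight K f) ≤ V(t) := by
  rintro _ ⟨g, hg, rfl⟩
  simpa [Nat.sub_add_cancel het] using (show g.IsHomogeneous (t - e) from hg).mul hf

variable {J : Ideal (MvPolynomial σ K)} {f : MvPolynomial σ K} {e t : ℕ}

theorem degreePart_sup_span_singleton (hJ : J.IsHomogeneous (homogeneousSubmodule σ K))
    (hf : f.IsHomogeneous e) (het : e ≤ t) :
    degreePart (J ⊔ Ideal.span {f}) t =
      degreePart J t ⊔ V(t - e).map (LinearMap.mulRight K f) := by
  refine le_antisymm ?_ (sup_le (inf_le_inf_right _ fun x hx => Ideal.mem_sup_left hx) ?_)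
  · rintro p ⟨hp, hpt⟩
    obtain ⟨j, hj, _, hq, rfl⟩ := Submodule.mem_sup.mp hp
    obtain ⟨a, rfl⟩ := Ideal.mem_span_singleton'.mp hq
    rw [← DirectSum.decompose_of_mem_same _ hpt, DirectSum.decompose_add, DirectSum.add_apply,
      Submodule.coe_add, DirectSum.coe_decompose_mul_of_right_mem_of_le _ hf het]
    exact Submodule.add_mem_sup ⟨hJ t hj, SetLike.coe_mem _⟩ ⟨_, SetLike.coe_mem _, rfl⟩
  · refine le_inf ?_ (map_mulRight_le hf het)
    rintro _ ⟨g, -, rfl⟩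
    exact Ideal.mem_sup_right (Ideal.mem_span_singleton'.mpr ⟨g, rfl⟩)

theorem degreePart_sup_span_singleton_of_lt (hJ : J.IsHomogeneous (homogeneousSubmodule σ K))
    (hf : f.IsHomogeneous e) (hte : t < e) :
    degreePart (J ⊔ Ideal.span {f}) t = degreePart J t := by
  refine le_antisymm ?_ (inf_le_inf_right _ fun x hx => Ideal.mem_sup_left hx)
  rintro p ⟨hp, hpt⟩
  obtain ⟨j, hj, _, hq, rfl⟩ := Submodule.mem_sup.mp hp
  obtain ⟨a, rfl⟩ := Ideal.mem_span_singleton'.mp hq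
  refine ⟨?_, hpt⟩
  rw [← DirectSum.decompose_of_mem_same _ hpt, DirectSum.decompose_add, DirectSum.add_apply,
    Submodule.coe_add, DirectSum.coe_decompose_mul_of_right_mem_of_not_le _ hf (by omega),
    add_zero]
  exact hJ t hj

theorem degreePart_inf_map_mulRight (hf : f.IsHomogeneous e) (het : e ≤ t) :
    degreePart J t ⊓ V(t - e).map (LinearMap.mulRight K f) =
      (degreePart (J.colon {f}) (t - e)).map (LinearMap.mulRight K f) := by
  apply le_antisymm
  · rintro _ ⟨hx, g, hg, rfl⟩
    exact ⟨g, ⟨Submodule.mem_colon_singleton.mpr hx.1, hg⟩, rfl⟩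
  · rintro _ ⟨g, ⟨hgJ, hg⟩, rfl⟩
    exact ⟨⟨Submodule.mem_colon_singleton.mp hgJ, map_mulRight_le hf het ⟨g, hg, rfl⟩⟩,
      g, hg, rfl⟩

theorem finrank_degreePart_sup_span_singleton_add [Finite σ]
    (hJ : J.IsHomogeneous (homogeneousSubmodule σ K)) (hf : f.IsHomogeneous e) (het : e ≤ t) :
    Module.finrank K (degreePart (J ⊔ Ideal.span {f}) t) +
        Module.finrank K (degreePart (J.colon {f}) (t - e)) =
      Module.finrank K (degreePart J t) + Module.finrank K V(t - e) := by
  have hker : degreePart (J.colon {f}) (t - e) ⊓ LinearMap.ker (LinearMap.mulRight K f) =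
      V(t - e) ⊓ LinearMap.ker (LinearMap.mulRight K f) := by
    refine le_antisymm (inf_le_inf_right _ inf_le_right) fun g ⟨hg, hgf⟩ => ⟨⟨?_, hg⟩, hgf⟩
    change g ∈ J.colon {f}
    rw [Submodule.mem_colon_singleton, smul_eq_mul, ← LinearMap.mulRight_apply (R := K),
      LinearMap.mem_ker.mp hgf]
    exact J.zero_mem
  have hgrass := Submodule.finrank_sup_add_finrank_inf_eq (degreePart J t)
    (V(t - e).map (LinearMap.mulRight K f))
  have hmap := Submodule.finrank_map_add_finrank_inf_ker V(t - e) (LinearMap.mulRight K f)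
  have hmapColon := Submodule.finrank_map_add_finrank_inf_ker (degreePart (J.colon {f}) (t - e))
    (LinearMap.mulRight K f)
  rw [← degreePart_sup_span_singleton hJ hf het, degreePart_inf_map_mulRight hf het] at hgrass
  rw [hker] at hmapColon
  omega

theorem degreePart_le_degreePart_colon (s : ℕ) : degreePart J s ≤ degreePart (J.colon {f}) s :=
  inf_le_inf_right _ ((Submodule.restrictScalars_le K).mpr Ideal.le_colon)

theorem degreePart_colon_le_iff (s : ℕ) :
    degreePart (J.colon {f}) s ≤ degreePart J s ↔ MulInjectiveInDegree J f s := by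
  refine ⟨fun h g hg hgf => (h ⟨Submodule.mem_colon_singleton.mpr hgf, hg⟩).1,
    fun h g ⟨hgf, hg⟩ => ⟨h g hg (Submodule.mem_colon_singleton.mp hgf), hg⟩⟩

theorem hilbertFn_sup_span_singleton [Finite σ]
    (hJ : J.IsHomogeneous (homogeneousSubmodule σ K)) (hf : f.IsHomogeneous e) (het : e ≤ t) :
    (hilbertFn K (J ⊔ Ideal.span {f}) t : ℤ) = hilbertFn K J t - hilbertFn K J (t - e) +
      (Module.finrank K (degreePart (J.colon {f}) (t - e)) -
        Module.finrank K (degreePart J (t - e))) := by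
  have := finrank_degreePart_sup_span_singleton_add hJ hf het
  have := hilbertFn_add_finrank_degreePart (J ⊔ Ideal.span {f}) t
  have := hilbertFn_add_finrank_degreePart J t
  have := hilbertFn_add_finrank_degreePart J (t - e)
  omega

theorem hilbertFn_sup_span_singleton_ge [Finite σ]
    (hJ : J.IsHomogeneous (homogeneousSubmodule σ K)) (hf : f.IsHomogeneous e) (het : e ≤ t) :
    (hilbertFn K J t : ℤ) - hilbertFn K J (t - e) ≤ hilbertFn K (J ⊔ Ideal.span {f}) t := by
  have := Submodule.finrank_mono (degreePart_le_degreePart_colon (J := J) (f := f) (t - e))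
  rw [hilbertFn_sup_span_singleton hJ hf het]
  omega

theorem hilbertFn_sup_span_singleton_eq_iff [Finite σ]
    (hJ : J.IsHomogeneous (homogeneousSubmodule σ K)) (hf : f.IsHomogeneous e) (het : e ≤ t) :
    (hilbertFn K (J ⊔ Ideal.span {f}) t : ℤ) = hilbertFn K J t - hilbertFn K J (t - e) ↔
      MulInjectiveInDegree J f (t - e) := by
  rw [hilbertFn_sup_span_singleton hJ hf het, ← degreePart_colon_le_iff, add_eq_left, sub_eq_zero,
    Nat.cast_inj]
  exact ⟨fun h => (Submodule.eq_of_le_of_finrank_eq (degreePart_le_degreePart_colon _) h.symm).ge,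
    fun h => le_antisymm (Submodule.finrank_mono h)
      (Submodule.finrank_mono (degreePart_le_degreePart_colon _))⟩

theorem hilbertFn_sup_span_singleton_of_lt [Finite σ]
    (hJ : J.IsHomogeneous (homogeneousSubmodule σ K)) (hf : f.IsHomogeneous e) (hte : t < e) :
    hilbertFn K (J ⊔ Ideal.span {f}) t = hilbertFn K J t := by
  have := hilbertFn_add_finrank_degreePart (J ⊔ Ideal.span {f}) t
  rw [degreePart_sup_span_singleton_of_lt hJ hf hte, ← hilbertFn_add_finrank_degreePart J t] at this
  omega

end GradedPieces

section Sequence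

variable {K σ : Type*} [Field K] {M : ℕ} (f : Fin M → MvPolynomial σ K) (dg : Fin M → ℕ)

noncomputable def spanPrefix (k : ℕ) : Ideal (MvPolynomial σ K) :=
  Ideal.span (f '' {j | (j : ℕ) < k})

noncomputable def seriesPrefix (n k : ℕ) : PowerSeries ℤ :=
  (∏ j ∈ Finset.univ.filter (fun j : Fin M => (j : ℕ) < k), (1 - PowerSeries.X ^ dg j)) *
    (PowerSeries.invOneSubPow ℤ n : PowerSeries ℤ)

noncomputable def hilbertDefect [Fintype σ] (k t : ℕ) : ℤ :=
  hilbertFn K (spanPrefix f k) t - PowerSeries.coeff t (seriesPrefix dg (Fintype.card σ) k)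

theorem spanPrefix_zero : spanPrefix f 0 = ⊥ := by
  simp [spanPrefix]

theorem spanPrefix_val (i : Fin M) : spanPrefix f i = prevIdeal f i := rfl

theorem spanPrefix_self : spanPrefix f M = Ideal.span (Set.range f) := by
  simp [spanPrefix, Set.image_univ]

theorem spanPrefix_succ (i : Fin M) :
    spanPrefix f (i + 1) = spanPrefix f i ⊔ Ideal.span {f i} := by
  rw [spanPrefix, spanPrefix, ← Ideal.span_union, ← Set.image_singleton, ← Set.image_union]
  congr 2
  ext j
  simp only [Set.mem_ofPred_eq, Set.mem_union, Set.mem_singleton_iff, Fin.ext_iff]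
  omega

theorem seriesPrefix_self (n : ℕ) : seriesPrefix dg n M = semiRegSeries n dg := by
  simp [seriesPrefix, semiRegSeries]

theorem coeff_seriesPrefix_succ (n : ℕ) (i : Fin M) (t : ℕ) :
    PowerSeries.coeff t (seriesPrefix dg n (i + 1)) = PowerSeries.coeff t (seriesPrefix dg n i) -
      if dg i ≤ t then PowerSeries.coeff (t - dg i) (seriesPrefix dg n i) else 0 := by
  have hset : Finset.univ.filter (fun j : Fin M => (j : ℕ) < i + 1) =
      insert i (Finset.univ.filter (fun j : Fin M => (j : ℕ) < i)) := by
    ext j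
    simp only [Finset.mem_filter, Finset.mem_univ, true_and, Finset.mem_insert, Fin.ext_iff]
    omega
  rw [seriesPrefix, seriesPrefix, hset, Finset.prod_insert (by simp), mul_assoc, sub_mul, one_mul,
    map_sub, PowerSeries.coeff_X_pow_mul']

theorem spanPrefix_isHomogeneous (hhom : ∀ i, (f i).IsHomogeneous (dg i)) (k : ℕ) :
    (spanPrefix f k).IsHomogeneous (homogeneousSubmodule σ K) :=
  Ideal.homogeneous_span _ _ fun _ ⟨j, _, hj⟩ => ⟨dg j, hj ▸ hhom j⟩

variable [Fintype σ]

theorem hilbertDefect_zero (t : ℕ) : hilbertDefect f dg 0 t = 0 := by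
  have := hilbertFn_add_finrank_degreePart (K := K) (σ := σ) ⊥ t
  rw [degreePart, Submodule.restrictScalars_bot, bot_inf_eq, finrank_bot, add_zero,
    finrank_homogeneousSubmodule] at this
  simp [hilbertDefect, spanPrefix_zero, seriesPrefix, this, PowerSeries.coeff_invOneSubPow]

variable {f dg} (hhom : ∀ i, (f i).IsHomogeneous (dg i))
include hhom

theorem hilbertDefect_succ_of_lt (i : Fin M) {t : ℕ} (ht : t < dg i) :
    hilbertDefect f dg (i + 1) t = hilbertDefect f dg i t := by
  rw [hilbertDefect, hilbertDefect, coeff_seriesPrefix_succ, if_neg (by omega), sub_zero,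
    spanPrefix_succ, hilbertFn_sup_span_singleton_of_lt (spanPrefix_isHomogeneous f dg hhom i)
      (hhom i) ht]

theorem hilbertDefect_succ_ge (i : Fin M) {t : ℕ} (ht : dg i ≤ t) :
    hilbertDefect f dg i t - hilbertDefect f dg i (t - dg i) ≤ hilbertDefect f dg (i + 1) t := by
  have := hilbertFn_sup_span_singleton_ge (spanPrefix_isHomogeneous f dg hhom i) (hhom i) ht
  rw [hilbertDefect, hilbertDefect, hilbertDefect, coeff_seriesPrefix_succ, if_pos ht,
    spanPrefix_succ]
  linarith

theorem hilbertDefect_succ_eq_iff (i : Fin M) {t : ℕ} (ht : dg i ≤ t) :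
    hilbertDefect f dg (i + 1) t = hilbertDefect f dg i t - hilbertDefect f dg i (t - dg i) ↔
      MulInjectiveInDegree (prevIdeal f i) (f i) (t - dg i) := by
  rw [← spanPrefix_val,
    ← hilbertFn_sup_span_singleton_eq_iff (spanPrefix_isHomogeneous f dg hhom i) (hhom i) ht,
    hilbertDefect, hilbertDefect, hilbertDefect, coeff_seriesPrefix_succ, if_pos ht,
    spanPrefix_succ]
  constructor <;> intro h <;> linarith

theorem hilbertDefect_eq_zero_of_mulInjective {T : ℕ}
    (hinj : ∀ i s, s + dg i < T → MulInjectiveInDegree (prevIdeal f i) (f i) s) :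
    ∀ k ≤ M, ∀ t < T, hilbertDefect f dg k t = 0 := by
  intro k
  induction k with
  | zero => exact fun _ t _ => hilbertDefect_zero f dg t
  | succ k ih =>
    intro hk t ht
    let i : Fin M := ⟨k, hk⟩
    have hkM : k ≤ M := Nat.le_of_succ_le hk
    by_cases hit : dg i ≤ t
    · rw [(hilbertDefect_succ_eq_iff hhom i hit).mpr (hinj i (t - dg i) (by omega)),
        ih hkM t ht, ih hkM (t - dg i) (by omega), sub_zero]
    · exact (hilbertDefect_succ_of_lt hhom i (by omega)).trans (ih hkM t ht)

theorem mulInjective_of_hilbertDefect_eq_zero (hpos : ∀ i, 0 < dg i) {T : ℕ}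
    (hdef : ∀ t < T, hilbertDefect f dg M t = 0) :
    ∀ i s, s + dg i < T → MulInjectiveInDegree (prevIdeal f i) (f i) s := by
  induction T with
  | zero => exact fun _ _ h => absurd h (Nat.not_lt_zero _)
  | succ T ih =>
    intro i s hs
    have hinj := ih fun t ht => hdef t (by omega)
    rcases Nat.lt_succ_iff_lt_or_eq.mp hs with hs | hs
    · exact hinj i s hs
    have hlow := hilbertDefect_eq_zero_of_mulInjective hhom hinj
    have hmono : ∀ k < M, hilbertDefect f dg k T ≤ hilbertDefect f dg (k + 1) T := by
      intro k hk
      let j : Fin M := ⟨k, hk⟩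
      by_cases hjT : dg j ≤ T
      · have := hilbertDefect_succ_ge hhom j hjT
        rwa [hlow k hk.le (T - dg j) (by have := hpos j; omega), sub_zero] at this
      · exact (hilbertDefect_succ_of_lt hhom j (by omega)).ge
    have hstep := eq_of_le_succ_of_last_eq_first hmono
      (by rw [hilbertDefect_zero, hdef T T.lt_succ_self]) i.isLt
    have hsT : T - dg i = s := by omega
    rw [← hsT, ← hilbertDefect_succ_eq_iff hhom i (by omega), hstep,
      hlow i i.is_le' (T - dg i) (by have := hpos i; omega), sub_zero]

end Sequence

end GBPaper

open GBPaper

theorem stmt2_general {K : Type*} [Field K] {n M : ℕ}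
    (f : Fin M → MvPolynomial (Fin n) K) (dg : Fin M → ℕ)
    (hhom : ∀ i, (f i).IsHomogeneous (dg i)) (hpos : ∀ i, 0 < dg i)
    (d : ℕ) :
    IsDRegularSeq f dg d ↔
      ∀ t : ℕ, t < d →
        (hilbertFn K (Ideal.span (Set.range f)) t : ℤ) =
          PowerSeries.coeff t (semiRegSeries n dg) := by
  have hdefect : ∀ t, hilbertDefect f dg M t =
      hilbertFn K (Ideal.span (Set.range f)) t - PowerSeries.coeff t (semiRegSeries n dg) := by
    intro t
    rw [hilbertDefect, spanPrefix_self, Fintype.card_fin, seriesPrefix_self]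
  constructor
  · intro hreg t ht
    have := hilbertDefect_eq_zero_of_mulInjective hhom
      (fun i s hs g hg => hreg i g s hg hs) M le_rfl t ht
    rwa [hdefect, sub_eq_zero] at this
  · intro hser i g e hg he
    exact mulInjective_of_hilbertDefect_eq_zero hhom hpos
      (fun t ht => by rw [hdefect, hser t ht, sub_self]) i e he g hg

/-- a sequence of homogeneous polynomials of positive degrees `dg i`
is `d`-regular (for `d ≥ max dg i`) iff the Hilbert series of `R/⟨f⟩` agrees with
`∏ (1 - z^{dg i}) / (1 - z)^n` modulo `z^d`. -/
theorem stmt2 {K : Type*} [Field K] {n M : ℕ}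
    (f : Fin M → MvPolynomial (Fin n) K) (dg : Fin M → ℕ)
    (hhom : ∀ i, (f i).IsHomogeneous (dg i)) (hpos : ∀ i, 0 < dg i)
    (d : ℕ) (hd : ∀ i, dg i ≤ d) :
    IsDRegularSeq f dg d ↔
      ∀ t : ℕ, t < d →
        (hilbertFn K (Ideal.span (Set.range f)) t : ℤ) =
          PowerSeries.coeff t (semiRegSeries n dg) :=
  stmt2_general f dg hhom hpos d
end

section
/- Let H = {h_1,...,h_m} ⊂ R' = K[x_1,...,x_n,y] be homogeneous with R/⟨H^top⟩ Artinian and the sequence (h_1^top,...,h_m^top) cryptographic semi-regular. Then the generalized degree of regularity of ⟨H⟩ satisfies d̃_reg(⟨H⟩) ≥ d_reg(⟨H^top⟩) − 1. -/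
open MvPolynomial

open GBPaper

/-!
Suppose the Hilbert function of `R'/⟨H⟩` is constant from `d₀` on but `d₀ + 1 < d_reg(⟨H^top⟩)`.
Multiplication by `y` from degree `d₀` to degree `d₀ + 1` of `R'/⟨H⟩` is injective, hence bijective
since both pieces have the same dimension. Setting `y = 0` then puts every form of degree `d₀ + 1`
of `R` into `⟨H^top⟩`, contradicting the minimality of `d_reg`.

Injectivity is where semi-regularity enters: if `y p = ∑ aᵢ hᵢ` in degree `d₀ + 1`, setting `y = 0`
gives a syzygy of the top parts in degree `< d_reg`, which by regularity is a combination of Koszul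
syzygies. Lifting them to `R'` shows `∑ aᵢ hᵢ ∈ y ⟨H⟩`, and cancelling `y` gives `p ∈ ⟨H⟩`.
-/

namespace GBPaper

section HomogeneousComponent

variable {K : Type*} [Field K] {σ : Type*}

attribute [local instance] MvPolynomial.gradedAlgebra in
theorem homogeneousComponent_mul_of_isHomogeneous {q : MvPolynomial σ K} {m : ℕ}
    (hq : q.IsHomogeneous m) (p : MvPolynomial σ K) (t : ℕ) :
    homogeneousComponent t (p * q) =
      if m ≤ t then homogeneousComponent (t - m) p * q else 0 := by
  have hdec : ∀ φ i, (DirectSum.decompose (homogeneousSubmodule σ K) φ i : MvPolynomial σ K) =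
      homogeneousComponent i φ := decomposition.decompose'_apply
  simpa only [hdec] using
    DirectSum.coe_decompose_mul_of_right_mem (homogeneousSubmodule σ K) (a := p) t hq

end HomogeneousComponent

section TopPart

variable {K : Type*} [Field K] {n : ℕ}

noncomputable def topPartAlgHom (K : Type*) [Field K] (n : ℕ) :
    MvPolynomial (Fin (n + 1)) K →ₐ[K] MvPolynomial (Fin n) K :=
  aeval (Fin.lastCases 0 fun i => X i)

theorem topPartAlgHom_apply (g : MvPolynomial (Fin (n + 1)) K) :
    topPartAlgHom K n g = topPartR g := rfl

theorem topPartR_X_last : topPartR (X (Fin.last n) : MvPolynomial (Fin (n + 1)) K) = 0 := by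
  simp [topPartR]

theorem topPartR_rename_castSucc (p : MvPolynomial (Fin n) K) :
    topPartR (rename Fin.castSucc p) = p := by
  rw [topPartR, aeval_rename]
  simp [Function.comp_def]

theorem topPartR_sub_X_last_mul (g p : MvPolynomial (Fin (n + 1)) K) :
    topPartR (g - X (Fin.last n) * p) = topPartR g := by
  simp [topPartR]

theorem X_last_dvd_sub_rename_topPartR (p : MvPolynomial (Fin (n + 1)) K) :
    X (Fin.last n) ∣ p - rename Fin.castSucc (topPartR p) := by
  rw [← Ideal.mem_span_singleton, ← Ideal.Quotient.eq]
  have hext : Ideal.Quotient.mkₐ K (Ideal.span {X (Fin.last n)}) =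
      (Ideal.Quotient.mkₐ K _).comp ((rename Fin.castSucc).comp (topPartAlgHom K n)) := by
    refine algHom_ext fun i => ?_
    induction i using Fin.lastCases with
    | last => simp [topPartAlgHom]
    | cast j => simp [topPartAlgHom]
  exact congr($hext p)

theorem isHomogeneous_topPartR {p : MvPolynomial (Fin (n + 1)) K} {d : ℕ}
    (hp : p.IsHomogeneous d) : (topPartR p).IsHomogeneous d := by
  have hvars : ∀ i : Fin (n + 1),
      (Fin.lastCases 0 (fun j => X j) i : MvPolynomial (Fin n) K).IsHomogeneous 1 := by
    intro i
    induction i using Fin.lastCases with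
    | last => simpa using isHomogeneous_zero (Fin n) K 1
    | cast j => simpa using isHomogeneous_X K j
  have := hp.aeval _ hvars
  rwa [one_mul] at this

theorem topPartR_mem_span_range {M : ℕ} (h : Fin M → MvPolynomial (Fin (n + 1)) K)
    {q : MvPolynomial (Fin (n + 1)) K} (hq : q ∈ Ideal.span (Set.range h)) :
    topPartR q ∈ Ideal.span (Set.range fun i => topPartR (h i)) := by
  have := Ideal.mem_map_of_mem (topPartAlgHom K n) hq
  rwa [Ideal.map_span, ← Set.range_comp] at this

end TopPart

section Syzygies

variable {K : Type*} [Field K] {σ : Type*} {M : ℕ}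
  {f : Fin M → MvPolynomial σ K} {dg : Fin M → ℕ}

noncomputable def tupleComponent (dg : Fin M → ℕ) (e : ℕ) (c : Fin M → MvPolynomial σ K) :
    Fin M → MvPolynomial σ K :=
  fun j => if dg j ≤ e then homogeneousComponent (e - dg j) (c j) else 0

theorem tupleHom_tupleComponent (e : ℕ) (c : Fin M → MvPolynomial σ K) :
    TupleHom dg (tupleComponent dg e c) e := by
  intro j
  unfold tupleComponent
  split_ifs with hj
  · exact ⟨homogeneousComponent_isHomogeneous _ _, fun hlt => absurd hj (by omega)⟩
  · exact ⟨isHomogeneous_zero _ _ _, fun _ => rfl⟩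

theorem tupleComponent_eq_zero (e : ℕ) {c : Fin M → MvPolynomial σ K} {j : Fin M}
    (hc : c j = 0) : tupleComponent dg e c j = 0 := by
  simp [tupleComponent, hc]

theorem syzSum_tupleComponent (hf : ∀ j, (f j).IsHomogeneous (dg j)) (e : ℕ)
    (c : Fin M → MvPolynomial σ K) :
    syzSum f (tupleComponent dg e c) = homogeneousComponent e (syzSum f c) := by
  simp only [syzSum, map_sum, homogeneousComponent_mul_of_isHomogeneous (hf _), tupleComponent,
    ite_mul, zero_mul]

theorem syzSum_eq_linearCombination (f v : Fin M → MvPolynomial σ K) :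
    syzSum f v = Fintype.linearCombination (MvPolynomial σ K) f v := rfl

theorem syzSum_eq_zero_of_mem_trivSyz {v : Fin M → MvPolynomial σ K} (hv : v ∈ trivSyz f) :
    syzSum f v = 0 := by
  rw [syzSum_eq_linearCombination, ← LinearMap.mem_ker]
  refine Submodule.span_le.mpr ?_ hv
  rintro _ ⟨i, j, -, rfl⟩
  simp [mul_comm]

theorem exists_tupleHom_syzSum_eq_of_mem_prevIdeal (hf : ∀ j, (f j).IsHomogeneous (dg j))
    {i₀ : Fin M} {g : MvPolynomial σ K} {e : ℕ} (hg : g.IsHomogeneous e)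
    (hmem : g ∈ prevIdeal f i₀) :
    ∃ c, TupleHom dg c e ∧ (∀ j, ¬ j < i₀ → c j = 0) ∧ syzSum f c = g := by
  obtain ⟨l, hl, rfl⟩ := Finsupp.mem_span_image_iff_linearCombination _ |>.mp hmem
  refine ⟨tupleComponent dg e l, tupleHom_tupleComponent e l,
    fun j hj => tupleComponent_eq_zero e (Finsupp.notMem_support_iff.mp fun h => hj (hl h)), ?_⟩
  have hsum : syzSum f l = Finsupp.linearCombination (MvPolynomial σ K) f l := by
    simp [syzSum, Finsupp.linearCombination_apply, Finsupp.sum_fintype]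
  rw [syzSum_tupleComponent hf, hsum, homogeneousComponent_eq_self hg]

theorem mul_mem_prevIdeal_of_syzSum_eq_zero {a : Fin M → MvPolynomial σ K}
    (hsyz : syzSum f a = 0) {i₀ : Fin M} (hvan : ∀ i, i₀ < i → a i = 0) :
    a i₀ * f i₀ ∈ prevIdeal f i₀ := by
  have hrest : ∑ i ∈ Finset.univ.erase i₀, a i * f i ∈ prevIdeal f i₀ := by
    refine Ideal.sum_mem _ fun i hi => ?_
    rcases lt_or_gt_of_ne (Finset.ne_of_mem_erase hi) with hlt | hgt
    · exact Ideal.mul_mem_left _ _ (Ideal.subset_span ⟨i, hlt, rfl⟩)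
    · simp [hvan i hgt]
  have hsplit := Finset.add_sum_erase Finset.univ (fun i => a i * f i) (Finset.mem_univ i₀)
  rw [← syzSum, hsyz, add_eq_zero_iff_eq_neg] at hsplit
  exact hsplit ▸ neg_mem hrest

/- Regularity puts `a i₀` into the ideal of the earlier `f j`; subtracting the corresponding Koszul
syzygies clears the entry at `i₀`. -/
theorem exists_sub_mem_trivSyz_vanishing_from (hf : ∀ j, (f j).IsHomogeneous (dg j)) {D t : ℕ}
    (hreg : IsDRegularSeq f dg D) (ht : t < D) {a : Fin M → MvPolynomial σ K}
    (ha : TupleHom dg a t) (hsyz : syzSum f a = 0) {i₀ : Fin M} (hvan : ∀ i, i₀ < i → a i = 0) :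
    ∃ a', TupleHom dg a' t ∧ syzSum f a' = 0 ∧ (∀ i, i₀ ≤ i → a' i = 0) ∧ a - a' ∈ trivSyz f := by
  classical
  by_cases hdeg : dg i₀ ≤ t
  swap
  · refine ⟨a, ha, hsyz, fun i hi => ?_, by simp⟩
    rcases hi.lt_or_eq with hlt | heq
    exacts [hvan i hlt, heq ▸ (ha i₀).2 (by omega)]
  obtain ⟨c, hc, hcvan, hcsum⟩ := exists_tupleHom_syzSum_eq_of_mem_prevIdeal hf (ha i₀).1
    (hreg i₀ _ _ (ha i₀).1 (by omega) (mul_mem_prevIdeal_of_syzSum_eq_zero hsyz hvan))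
  set s : Fin M → MvPolynomial σ K := ∑ j, c j • (Pi.single i₀ (f j) - Pi.single j (f i₀))
  have hs : s ∈ trivSyz f := by
    refine Submodule.sum_mem _ fun j _ => ?_
    by_cases hj : j < i₀
    · exact Submodule.smul_mem _ _ (Submodule.subset_span ⟨j, i₀, hj, rfl⟩)
    · simp [hcvan j hj]
  have hs_apply : ∀ l, s l = if l = i₀ then a i₀ else -(c l * f i₀) := by
    intro l
    simp only [s, Finset.sum_apply, Pi.smul_apply, Pi.sub_apply, Pi.single_apply, smul_eq_mul,
      mul_sub, mul_ite, mul_zero, Finset.sum_sub_distrib, Finset.sum_ite_irrel,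
      Finset.sum_const_zero, Finset.sum_ite_eq, Finset.mem_univ, if_true]
    split_ifs with hl
    · rw [hl, hcvan i₀ (lt_irrefl _), zero_mul, sub_zero]
      exact hcsum
    · rw [zero_sub]
  refine ⟨a - s, fun j => ?_, ?_, fun i hi => ?_, by simpa using hs⟩
  · rw [Pi.sub_apply, hs_apply]
    split_ifs with hj
    · rw [hj, sub_self]
      exact ⟨isHomogeneous_zero _ _ _, fun _ => rfl⟩
    rw [sub_neg_eq_add]
    by_cases hcj : dg j ≤ t - dg i₀
    · have hmul := (hc j).1.mul (hf i₀)
      rw [show t - dg i₀ - dg j + dg i₀ = t - dg j by omega] at hmul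
      exact ⟨(ha j).1.add hmul, fun hlt => absurd hcj (by omega)⟩
    · rw [(hc j).2 (by omega), zero_mul, add_zero]
      exact ha j
  · rw [syzSum_eq_linearCombination, map_sub, ← syzSum_eq_linearCombination,
      ← syzSum_eq_linearCombination, hsyz, syzSum_eq_zero_of_mem_trivSyz hs, sub_zero]
  · rw [Pi.sub_apply, hs_apply]
    split_ifs with h
    · rw [h, sub_self]
    · rw [hvan i (lt_of_le_of_ne hi (Ne.symm h)), hcvan i (not_lt.mpr hi), zero_mul, neg_zero,
        sub_zero]

theorem mem_trivSyz_of_syzSum_eq_zero (hf : ∀ j, (f j).IsHomogeneous (dg j)) {D t : ℕ}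
    (hreg : IsDRegularSeq f dg D) (ht : t < D) {a : Fin M → MvPolynomial σ K}
    (ha : TupleHom dg a t) (hsyz : syzSum f a = 0) : a ∈ trivSyz f := by
  suffices key : ∀ k, ∀ a : Fin M → MvPolynomial σ K, TupleHom dg a t → syzSum f a = 0 →
      (∀ i : Fin M, k ≤ i.val → a i = 0) → a ∈ trivSyz f from
    key M a ha hsyz fun i hi => absurd i.isLt (by omega)
  intro k
  induction k with
  | zero =>
    intro a _ _ hvan
    rw [show a = 0 from funext fun i => hvan i (Nat.zero_le _)]
    exact zero_mem _
  | succ k ih =>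
    intro a ha hsyz hvan
    by_cases hk : k < M
    · obtain ⟨a', ha', hsyz', hvan', hsub⟩ :=
        exists_sub_mem_trivSyz_vanishing_from hf hreg ht ha hsyz (i₀ := ⟨k, hk⟩)
          fun i hi => hvan i hi
      simpa using add_mem hsub (ih a' ha' hsyz' fun i hi => hvan' i hi)
    · exact ih a ha hsyz fun i hi => absurd i.isLt (by omega)

end Syzygies

section HilbertFunction

variable {K : Type*} [Field K] {σ : Type*} [Finite σ]

theorem exists_sub_X_mul_mem_of_hilbertFn_succ_eq {I : Ideal (MvPolynomial σ K)} (s : σ) {d : ℕ}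
    (hinj : ∀ p : MvPolynomial σ K, p.IsHomogeneous d → X s * p ∈ I → p ∈ I)
    (hdim : hilbertFn K I (d + 1) = hilbertFn K I d) {g : MvPolynomial σ K}
    (hg : g.IsHomogeneous (d + 1)) :
    ∃ p : MvPolynomial σ K, g - X s * p ∈ I := by
  let π := (Ideal.Quotient.mkₐ K I).toLinearMap
  let V : ℕ → Submodule K (MvPolynomial σ K ⧸ I) := fun e => (homogeneousSubmodule σ K e).map π
  have hfin : ∀ e, FiniteDimensional K (V e) := fun e =>
    Module.Finite.iff_fg.mpr ((homogeneousSubmodule_fg σ K e).map π)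
  have hmaps : ∀ x ∈ V d, Ideal.Quotient.mk I (X s) * x ∈ V (d + 1) := by
    rintro _ ⟨p, hp, rfl⟩
    exact ⟨X s * p, by simpa [add_comm] using (isHomogeneous_X K s).mul hp, by simp [π]⟩
  let L : V d →ₗ[K] V (d + 1) := (LinearMap.mulLeft K (Ideal.Quotient.mk I (X s))).restrict hmaps
  have hL_inj : Function.Injective L := by
    rw [← LinearMap.ker_eq_bot, LinearMap.ker_eq_bot']
    rintro ⟨_, p, hp, rfl⟩ hx
    have hx' : Ideal.Quotient.mk I (X s * p) = 0 := by
      rw [map_mul]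
      exact congrArg Subtype.val hx
    ext1
    exact Ideal.Quotient.eq_zero_iff_mem.mpr (hinj p hp (Ideal.Quotient.eq_zero_iff_mem.mp hx'))
  have hsurj := (LinearMap.injective_iff_surjective_of_finrank_eq_finrank hdim.symm).mp hL_inj
  obtain ⟨⟨_, p, _, rfl⟩, hx⟩ := hsurj ⟨π g, g, hg, rfl⟩
  refine ⟨p, Ideal.Quotient.eq.mp ?_⟩
  rw [map_mul]
  exact (congrArg Subtype.val hx).symm

end HilbertFunction

section Homogenization

variable {K : Type*} [Field K] {n M : ℕ} (h : Fin M → MvPolynomial (Fin (n + 1)) K)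

theorem exists_X_last_mul_eq_syzSum_rename_of_mem_trivSyz {v : Fin M → MvPolynomial (Fin n) K}
    (hv : v ∈ trivSyz fun i => topPartR (h i)) :
    ∃ q ∈ Ideal.span (Set.range h),
      syzSum h (fun i => rename Fin.castSucc (v i)) = X (Fin.last n) * q := by
  classical
  choose r hr using fun i => X_last_dvd_sub_rename_topPartR (h i)
  have hmem : ∀ i, h i ∈ Ideal.span (Set.range h) := fun i => Ideal.subset_span ⟨i, rfl⟩
  induction hv using Submodule.span_induction with
  | mem v hv =>
    obtain ⟨i, j, -, rfl⟩ := hv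
    refine ⟨r j * h i - r i * h j,
      Ideal.sub_mem _ (Ideal.mul_mem_left _ _ (hmem i)) (Ideal.mul_mem_left _ _ (hmem j)), ?_⟩
    simp only [syzSum, Pi.sub_apply, Pi.single_apply, map_sub, apply_ite (rename Fin.castSucc),
      map_zero, sub_mul, ite_mul, zero_mul, Finset.sum_sub_distrib, Finset.sum_ite_eq',
      Finset.mem_univ, if_true]
    linear_combination h i * hr j - h j * hr i
  | zero => exact ⟨0, zero_mem _, by simp [syzSum]⟩
  | add v w _ _ hv hw =>
    obtain ⟨q, hq, hvq⟩ := hv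
    obtain ⟨q', hq', hwq⟩ := hw
    refine ⟨q + q', add_mem hq hq', ?_⟩
    simp only [syzSum, Pi.add_apply, map_add, add_mul, Finset.sum_add_distrib] at hvq hwq ⊢
    rw [hvq, hwq, mul_add]
  | smul c v _ hv =>
    obtain ⟨q, hq, hvq⟩ := hv
    refine ⟨rename Fin.castSucc c * q, Ideal.mul_mem_left _ _ hq, ?_⟩
    simp only [syzSum, Pi.smul_apply, smul_eq_mul, map_mul, mul_assoc, ← Finset.mul_sum] at hvq ⊢
    rw [hvq, mul_left_comm]

theorem mem_span_of_X_last_mul_mem (dg : Fin M → ℕ) (hhom : ∀ i, (h i).IsHomogeneous (dg i))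
    {D d : ℕ} (hreg : IsDRegularSeq (fun i => topPartR (h i)) dg D) (hd : d + 1 < D)
    {p : MvPolynomial (Fin (n + 1)) K} (hp : p.IsHomogeneous d)
    (hyp : X (Fin.last n) * p ∈ Ideal.span (Set.range h)) :
    p ∈ Ideal.span (Set.range h) := by
  obtain ⟨c, hc⟩ := Ideal.mem_span_range_iff_exists_fun.mp hyp
  set a := tupleComponent dg (d + 1) c
  have hyp_hom : (X (Fin.last n) * p).IsHomogeneous (d + 1) := by
    simpa [add_comm] using (isHomogeneous_X K _).mul hp
  have hsum : syzSum h a = X (Fin.last n) * p := by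
    rw [syzSum_tupleComponent hhom, syzSum, hc, homogeneousComponent_eq_self hyp_hom]
  have htop : syzSum (fun i => topPartR (h i)) (fun i => topPartR (a i)) = 0 := by
    have := congrArg (topPartAlgHom K n) hsum
    simp only [syzSum, map_sum, map_mul] at this
    simpa only [syzSum, topPartAlgHom_apply, topPartR_X_last, zero_mul] using this
  have ha : TupleHom dg a (d + 1) := tupleHom_tupleComponent _ c
  have hatop : TupleHom dg (fun i => topPartR (a i)) (d + 1) := fun i =>
    ⟨isHomogeneous_topPartR (ha i).1, fun hi => by simp [(ha i).2 hi, topPartR]⟩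
  obtain ⟨q, hq, hqeq⟩ := exists_X_last_mul_eq_syzSum_rename_of_mem_trivSyz h
    (mem_trivSyz_of_syzSum_eq_zero (fun i => isHomogeneous_topPartR (hhom i)) hreg hd hatop htop)
  choose b hb using fun i => X_last_dvd_sub_rename_topPartR (a i)
  have hcancel : X (Fin.last n) * p = X (Fin.last n) * (q + syzSum h b) := by
    calc X (Fin.last n) * p = syzSum h a := hsum.symm
      _ = syzSum h (fun i => rename Fin.castSucc (topPartR (a i))) +
          syzSum h (fun i => a i - rename Fin.castSucc (topPartR (a i))) := by
        simp [syzSum, sub_mul]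
      _ = X (Fin.last n) * (q + syzSum h b) := by
        rw [hqeq, mul_add]
        simp only [syzSum, hb, mul_assoc, ← Finset.mul_sum]
  rw [mul_left_cancel₀ (X_ne_zero _) hcancel]
  exact add_mem hq (Ideal.sum_mem _ fun i _ => Ideal.mul_mem_left _ _ (Ideal.subset_span ⟨i, rfl⟩))

end Homogenization

end GBPaper

theorem stmt7_general {K : Type*} [Field K] {n M : ℕ}
    (h : Fin M → MvPolynomial (Fin (n + 1)) K) (dg : Fin M → ℕ)
    (hhom : ∀ i, (h i).IsHomogeneous (dg i))
    (hcsr : IsDRegularSeq (fun i => topPartR (h i)) dg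
      (degReg K (Ideal.span (Set.range fun i => topPartR (h i))))) :
    ∀ d₀ : ℕ, (∀ d : ℕ, d₀ ≤ d →
        hilbertFn K (Ideal.span (Set.range h)) d =
          hilbertFn K (Ideal.span (Set.range h)) d₀) →
      degReg K (Ideal.span (Set.range fun i => topPartR (h i))) - 1 ≤ d₀ := by
  intro d₀ hconst
  by_contra! hlt
  have hJ : ∀ g : MvPolynomial (Fin n) K, g.IsHomogeneous (d₀ + 1) →
      g ∈ Ideal.span (Set.range fun i => topPartR (h i)) := by
    intro g hg
    obtain ⟨p, hp⟩ := exists_sub_X_mul_mem_of_hilbertFn_succ_eq (Fin.last n)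
      (fun p hp => mem_span_of_X_last_mul_mem h dg hhom hcsr (by omega) hp)
      (hconst _ d₀.le_succ) (hg.rename_isHomogeneous (f := Fin.castSucc))
    simpa only [topPartR_sub_X_last_mul, topPartR_rename_castSucc] using
      topPartR_mem_span_range h hp
  have : degReg K (Ideal.span (Set.range fun i => topPartR (h i))) ≤ d₀ + 1 := Nat.sInf_le hJ
  omega

/-- if `R/⟨H^top⟩` is Artinian and the sequence of top parts is
cryptographic semi-regular, then the generalized degree of regularity of `⟨H⟩`
is at least `d_reg(⟨H^top⟩) - 1` (stated as: any degree from which the Hilbert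
function of `R'/⟨H⟩` is constant is at least `d_reg(⟨H^top⟩) - 1`). -/
theorem stmt7 {K : Type*} [Field K] {n M : ℕ}
    (h : Fin M → MvPolynomial (Fin (n + 1)) K) (dg : Fin M → ℕ)
    (hhom : ∀ i, (h i).IsHomogeneous (dg i)) (hpos : ∀ i, 0 < dg i)
    (hArt : ∃ d : ℕ, ∀ g : MvPolynomial (Fin n) K, g.IsHomogeneous d →
      g ∈ Ideal.span (Set.range fun i => topPartR (h i)))
    (hcsr : IsDRegularSeq (fun i => topPartR (h i)) dg
      (degReg K (Ideal.span (Set.range fun i => topPartR (h i))))) :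
    ∀ d₀ : ℕ, (∀ d : ℕ, d₀ ≤ d →
        hilbertFn K (Ideal.span (Set.range h)) d =
          hilbertFn K (Ideal.span (Set.range h)) d₀) →
      degReg K (Ideal.span (Set.range fun i => topPartR (h i))) - 1 ≤ d₀ :=
  stmt7_general h dg hhom hcsr
end

section
/- Let f_1,...,f_m be homogeneous polynomials of positive degrees in R = K[x_1,...,x_n], and suppose that for some natural numbers D and i, the degree-≤D part of the i-th Koszul homology H_i(K_•(f_1,...,f_m)) vanishes. Then for each j with 1 ≤ j < m, the degree-≤D part of H_i(K_•(f_1,...,f_j)) also vanishes. -/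
open MvPolynomial

/-! The Koszul complex of `(f_1,…,f_{m+1})` is the mapping cone of multiplication by
`±f_{m+1}` on the Koszul complex of `(f_1,…,f_m)`: writing a chain `w` as `(a, b)`, with `a`
its components on index sets avoiding `m+1` and `b` those on index sets containing `m+1`,
the differential reads `∂w = (∂'a ± f_{m+1} b, ∂'b)`.

Let `v` be a homogeneous `i`-cycle of degree `d ≤ D` for `(f_1,…,f_m)`. Extended by zero it is
a cycle for `(f_1,…,f_{m+1})`, hence a boundary `∂w` with `w = (a, b)` homogeneous of degree
`d`; so `v = ∂'a ± f_{m+1} b` and `∂'b = 0`. Since `b` has degree `d - deg f_{m+1} < d`,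
induction on `d` gives `b = ∂'c`, and then `v = ∂'(a ± f_{m+1} c)`. Dropping the last
polynomial one at a time gives the claim for every `j`. -/

open Finset

namespace MvPolynomial

variable {R σ : Type*}

attribute [local instance] MvPolynomial.gradedAlgebra

theorem homogeneousComponent_mul_of_isHomogeneous_left [CommSemiring R]
    {p : MvPolynomial σ R} {a : ℕ} (hp : p.IsHomogeneous a) (q : MvPolynomial σ R) (e : ℕ) :
    homogeneousComponent e (p * q) =
      if a ≤ e then p * homogeneousComponent (e - a) q else 0 := by
  simp only [← decomposition.decompose'_apply]
  exact DirectSum.coe_decompose_mul_of_left_mem (homogeneousSubmodule σ R) e hp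

theorem IsHomogeneous.neg_one_pow_mul [CommRing R] {p : MvPolynomial σ R} {a : ℕ}
    (hp : p.IsHomogeneous a) (c : ℕ) : ((-1) ^ c * p).IsHomogeneous a := by
  simpa using ((isHomogeneous_one σ R).neg.pow c).mul hp

end MvPolynomial

namespace GBPaper

section CastSucc

variable {m : ℕ}

def castSuccFinset (s : Finset (Fin m)) : Finset (Fin (m + 1)) := s.map Fin.castSuccEmb

noncomputable def castSuccPreimage (s : Finset (Fin (m + 1))) : Finset (Fin m) :=
  s.preimage Fin.castSucc (Fin.castSucc_injective m).injOn

@[simp] theorem castSucc_mem_castSuccFinset {k : Fin m} {s : Finset (Fin m)} :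
    k.castSucc ∈ castSuccFinset s ↔ k ∈ s :=
  mem_map' _

@[simp] theorem last_notMem_castSuccFinset (s : Finset (Fin m)) :
    Fin.last m ∉ castSuccFinset s := by
  simp [castSuccFinset, Fin.castSucc_ne_last]

@[simp] theorem card_castSuccFinset (s : Finset (Fin m)) : #(castSuccFinset s) = #s :=
  card_map _

@[simp] theorem castSuccPreimage_castSuccFinset (s : Finset (Fin m)) :
    castSuccPreimage (castSuccFinset s) = s := by
  ext k
  simp [castSuccPreimage]

theorem castSuccFinset_castSuccPreimage {s : Finset (Fin (m + 1))} (h : Fin.last m ∉ s) :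
    castSuccFinset (castSuccPreimage s) = s := by
  ext x
  induction x using Fin.lastCases with
  | last => simpa using h
  | cast k => simp [castSuccPreimage]

theorem card_castSuccPreimage {s : Finset (Fin (m + 1))} (h : Fin.last m ∉ s) :
    #(castSuccPreimage s) = #s := by
  rw [← card_castSuccFinset, castSuccFinset_castSuccPreimage h]

theorem castSuccFinset_insert (k : Fin m) (s : Finset (Fin m)) :
    castSuccFinset (insert k s) = insert k.castSucc (castSuccFinset s) :=
  map_insert _ _ _

theorem card_filter_castSuccFinset_lt (s : Finset (Fin m)) (j : Fin m) :
    #((castSuccFinset s).filter (· < j.castSucc)) = #(s.filter (· < j)) := by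
  rw [castSuccFinset, filter_map, card_map]
  rfl

theorem card_filter_castSuccFinset_lt_last (s : Finset (Fin m)) :
    #((castSuccFinset s).filter (· < Fin.last m)) = #s := by
  rw [filter_true_of_mem, card_castSuccFinset]
  simp [castSuccFinset, Fin.castSucc_lt_last]

theorem filter_insert_last_lt_castSucc (s : Finset (Fin (m + 1))) (j : Fin m) :
    (insert (Fin.last m) s).filter (· < j.castSucc) = s.filter (· < j.castSucc) :=
  by rw [filter_insert, if_neg (Fin.castSucc_lt_last j).not_gt]

theorem sum_castSuccFinset {M : Type*} [AddCommMonoid M] (s : Finset (Fin m))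
    (g : Fin (m + 1) → M) :
    ∑ j ∈ castSuccFinset s, g j = ∑ k ∈ s, g k.castSucc :=
  sum_map _ _ _

end CastSucc

section Koszul

variable {K : Type*} [Field K] {σ : Type*}

theorem koszulD_add_smul {M : ℕ} (f : Fin M → MvPolynomial σ K) (i : ℕ)
    (a c : KIdx M (i + 1) → MvPolynomial σ K) (g : MvPolynomial σ K) :
    koszulD f i (a + g • c) = koszulD f i a + g • koszulD f i c := by
  funext t
  simp only [koszulD, Pi.add_apply, Pi.smul_apply, smul_eq_mul, mul_sum, ← sum_add_distrib]
  refine sum_congr rfl fun j _ => ?_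
  split_ifs <;> ring

theorem koszulD_zero {M : ℕ} (f : Fin M → MvPolynomial σ K) (i : ℕ) :
    koszulD f i 0 = 0 := by
  funext t
  simp [koszulD]

variable {m i : ℕ}

noncomputable def extendChain (v : KIdx m i → MvPolynomial σ K) :
    KIdx (m + 1) i → MvPolynomial σ K :=
  fun s => if h : Fin.last m ∈ s.val then 0
    else v ⟨castSuccPreimage s.val, by rw [card_castSuccPreimage h, s.prop]⟩

noncomputable def chainWithoutLast (w : KIdx (m + 1) i → MvPolynomial σ K) :
    KIdx m i → MvPolynomial σ K :=
  fun t => w ⟨castSuccFinset t.val, by rw [card_castSuccFinset, t.prop]⟩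

noncomputable def chainWithLast (w : KIdx (m + 1) (i + 1) → MvPolynomial σ K) :
    KIdx m i → MvPolynomial σ K :=
  fun t => w ⟨insert (Fin.last m) (castSuccFinset t.val), by
    rw [card_insert_of_notMem (last_notMem_castSuccFinset _), card_castSuccFinset, t.prop]⟩

theorem extendChain_of_last_mem (v : KIdx m i → MvPolynomial σ K) {s : KIdx (m + 1) i}
    (h : Fin.last m ∈ s.val) : extendChain v s = 0 :=
  dif_pos h

theorem extendChain_castSuccFinset (v : KIdx m i → MvPolynomial σ K) (t : KIdx m i)
    {s : KIdx (m + 1) i} (hs : s.val = castSuccFinset t.val) : extendChain v s = v t := by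
  rw [extendChain, dif_neg (hs ▸ last_notMem_castSuccFinset _)]
  congr
  rw [hs, castSuccPreimage_castSuccFinset]

theorem chainWithoutLast_extendChain (v : KIdx m i → MvPolynomial σ K) :
    chainWithoutLast (extendChain v) = v :=
  funext fun t => extendChain_castSuccFinset v t rfl

theorem chainWithLast_extendChain (v : KIdx m (i + 1) → MvPolynomial σ K) :
    chainWithLast (extendChain v) = 0 :=
  funext fun _ => extendChain_of_last_mem v (mem_insert_self _ _)

variable (f : Fin (m + 1) → MvPolynomial σ K)

theorem chainWithoutLast_koszulD (W : KIdx (m + 1) (i + 1) → MvPolynomial σ K) :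
    chainWithoutLast (koszulD f i W) =
      koszulD (fun k => f k.castSucc) i (chainWithoutLast W) +
        ((-1) ^ i * f (Fin.last m)) • chainWithLast W := by
  funext t
  have ht : #t.val = i := t.prop
  simp only [chainWithoutLast, chainWithLast, koszulD, Pi.add_apply, Pi.smul_apply, smul_eq_mul]
  rw [Fin.sum_univ_castSucc, dif_neg (last_notMem_castSuccFinset _),
    card_filter_castSuccFinset_lt_last, ht]
  congr 1
  refine sum_congr rfl fun k _ => ?_
  by_cases hk : k ∈ t.val
  · rw [dif_pos (castSucc_mem_castSuccFinset.2 hk), dif_pos hk]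
  · rw [dif_neg (mt castSucc_mem_castSuccFinset.1 hk), dif_neg hk, card_filter_castSuccFinset_lt]
    exact congrArg _ (congrArg W (Subtype.ext (castSuccFinset_insert k t.val).symm))

theorem chainWithLast_koszulD (W : KIdx (m + 1) (i + 2) → MvPolynomial σ K) :
    chainWithLast (koszulD f (i + 1) W) = koszulD (fun k => f k.castSucc) i (chainWithLast W) := by
  funext t
  simp only [chainWithLast, koszulD]
  rw [Fin.sum_univ_castSucc, dif_pos (mem_insert_self _ _), add_zero]
  refine sum_congr rfl fun k _ => ?_
  by_cases hk : k ∈ t.val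
  · rw [dif_pos (mem_insert_of_mem (castSucc_mem_castSuccFinset.2 hk)), dif_pos hk]
  · have hk' : k.castSucc ∉ insert (Fin.last m) (castSuccFinset t.val) := by
      simp [hk, Fin.castSucc_ne_last]
    rw [dif_neg hk', dif_neg hk, filter_insert_last_lt_castSucc, card_filter_castSuccFinset_lt]
    refine congrArg _ (congrArg W (Subtype.ext ?_))
    dsimp only
    rw [castSuccFinset_insert, insert_comm]

theorem koszulD_extendChain (v : KIdx m (i + 1) → MvPolynomial σ K) :
    koszulD f i (extendChain v) = extendChain (koszulD (fun k => f k.castSucc) i v) := by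
  funext ⟨s, hs⟩
  by_cases hlast : Fin.last m ∈ s
  · rw [extendChain_of_last_mem _ hlast]
    refine sum_eq_zero fun j _ => ?_
    split_ifs
    · rfl
    · rw [extendChain_of_last_mem _ (mem_insert_of_mem hlast), mul_zero]
  obtain ⟨t, rfl⟩ : ∃ t, castSuccFinset t = s := ⟨_, castSuccFinset_castSuccPreimage hlast⟩
  have ht : #t = i := by rwa [card_castSuccFinset] at hs
  rw [extendChain_castSuccFinset _ ⟨t, ht⟩ rfl]
  simp only [koszulD]
  rw [Fin.sum_univ_castSucc, dif_neg (last_notMem_castSuccFinset _),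
    extendChain_of_last_mem _ (mem_insert_self _ _), mul_zero, add_zero]
  refine sum_congr rfl fun k _ => ?_
  by_cases hk : k ∈ t
  · rw [dif_pos (castSucc_mem_castSuccFinset.2 hk), dif_pos hk]
  · rw [dif_neg (mt castSucc_mem_castSuccFinset.1 hk), dif_neg hk, card_filter_castSuccFinset_lt,
      extendChain_castSuccFinset _ ⟨insert k t, by rw [card_insert_of_notMem hk, ht]⟩
        (castSuccFinset_insert k t).symm]

theorem isKCycle_extendChain {v : KIdx m i → MvPolynomial σ K}
    (hv : IsKCycle (fun k => f k.castSucc) i v) : IsKCycle f i (extendChain v) := by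
  cases i with
  | zero => trivial
  | succ i =>
    change koszulD f i (extendChain v) = 0
    rw [koszulD_extendChain, show koszulD _ i v = 0 from hv]
    funext s
    simp [extendChain]

theorem isKCycle_chainWithLast {W : KIdx (m + 1) (i + 1) → MvPolynomial σ K}
    {v : KIdx m i → MvPolynomial σ K} (hW : koszulD f i W = extendChain v) :
    IsKCycle (fun k => f k.castSucc) i (chainWithLast W) := by
  cases i with
  | zero => trivial
  | succ i => rw [IsKCycle, ← chainWithLast_koszulD, hW, chainWithLast_extendChain]

theorem kChainHom_extendChain (dg : Fin (m + 1) → ℕ) {d : ℕ} {v : KIdx m i → MvPolynomial σ K}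
    (hv : KChainHom (fun k => dg k.castSucc) i v d) : KChainHom dg i (extendChain v) d := by
  rintro ⟨s, hs⟩
  by_cases hlast : Fin.last m ∈ s
  · rw [extendChain_of_last_mem v hlast]
    exact ⟨isHomogeneous_zero _ _ _, fun _ => rfl⟩
  obtain ⟨t, rfl⟩ : ∃ t, castSuccFinset t = s := ⟨_, castSuccFinset_castSuccPreimage hlast⟩
  have ht : #t = i := by rwa [card_castSuccFinset] at hs
  rw [extendChain_castSuccFinset _ ⟨t, ht⟩ rfl, sum_castSuccFinset]
  exact hv ⟨t, ht⟩

end Koszul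

section HomogeneousPart

variable {K : Type*} [Field K] {σ : Type*} {M i : ℕ}

noncomputable def homogeneousPart (dg : Fin M → ℕ) (d : ℕ) (w : KIdx M i → MvPolynomial σ K) :
    KIdx M i → MvPolynomial σ K :=
  fun s => if ∑ j ∈ s.val, dg j ≤ d then homogeneousComponent (d - ∑ j ∈ s.val, dg j) (w s)
    else 0

theorem homogeneousPart_of_kChainHom {dg : Fin M → ℕ} {d : ℕ} {v : KIdx M i → MvPolynomial σ K}
    (hv : KChainHom dg i v d) : homogeneousPart dg d v = v := by
  funext s
  by_cases h : ∑ j ∈ s.val, dg j ≤ d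
  · rw [homogeneousPart, if_pos h, homogeneousComponent_eq_self (hv s).1]
  · rw [homogeneousPart, if_neg h, (hv s).2 (not_le.1 h)]

theorem koszulD_homogeneousPart (f : Fin M → MvPolynomial σ K) {dg : Fin M → ℕ}
    (hf : ∀ j, (f j).IsHomogeneous (dg j)) (d : ℕ) (w : KIdx M (i + 1) → MvPolynomial σ K) :
    koszulD f i (homogeneousPart dg d w) = homogeneousPart dg d (koszulD f i w) := by
  funext s
  simp only [homogeneousPart, koszulD]
  split_ifs with hs
  · rw [map_sum]
    refine sum_congr rfl fun j _ => ?_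
    by_cases hj : j ∈ s.val
    · simp only [dif_pos hj, map_zero]
    · rw [dif_neg hj, dif_neg hj,
        homogeneousComponent_mul_of_isHomogeneous_left ((hf j).neg_one_pow_mul _), sum_insert hj]
      split_ifs
      · rw [Nat.sub_sub, Nat.add_comm (∑ x ∈ s.val, dg x)]
      · omega
      · omega
      · rw [mul_zero]
  · refine sum_eq_zero fun j _ => ?_
    split_ifs with hj h
    · rfl
    · rw [sum_insert hj] at h; omega
    · rw [mul_zero]

theorem kChainHom_chainWithLast_homogeneousPart {m : ℕ} (dg : Fin (m + 1) → ℕ) (d : ℕ)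
    (w : KIdx (m + 1) (i + 1) → MvPolynomial σ K) :
    KChainHom (fun k => dg k.castSucc) i (chainWithLast (homogeneousPart dg d w))
      (d - dg (Fin.last m)) := by
  intro t
  simp only [chainWithLast, homogeneousPart]
  rw [sum_insert (last_notMem_castSuccFinset _), sum_castSuccFinset]
  constructor
  · split_ifs
    · rw [show d - (dg (Fin.last m) + ∑ k ∈ t.val, dg k.castSucc) =
        d - dg (Fin.last m) - ∑ k ∈ t.val, dg k.castSucc by omega]
      exact homogeneousComponent_isHomogeneous _ _
    · exact isHomogeneous_zero _ _ _
  · intro hlt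
    rw [if_neg (by omega)]

theorem chainWithLast_homogeneousPart_of_lt {m : ℕ} (dg : Fin (m + 1) → ℕ) {d : ℕ}
    (hd : d < dg (Fin.last m)) (w : KIdx (m + 1) (i + 1) → MvPolynomial σ K) :
    chainWithLast (homogeneousPart dg d w) = 0 := by
  funext t
  simp only [chainWithLast, homogeneousPart]
  rw [sum_insert (last_notMem_castSuccFinset _), if_neg (by omega), Pi.zero_apply]

end HomogeneousPart

variable {K : Type*} [Field K] {σ : Type*}

theorem koszulHVanish_castSucc {m : ℕ} (f : Fin (m + 1) → MvPolynomial σ K)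
    (dg : Fin (m + 1) → ℕ) (hf : ∀ j, (f j).IsHomogeneous (dg j)) (hdg : 0 < dg (Fin.last m))
    {i D : ℕ} (hvan : ∀ d ≤ D, KoszulHVanish f dg i d) (d : ℕ) (hd : d ≤ D) :
    KoszulHVanish (fun k => f k.castSucc) (fun k => dg k.castSucc) i d := by
  induction d using Nat.strong_induction_on with
  | _ d IH =>
  intro v hv hcyc
  obtain ⟨w₀, hw₀⟩ := hvan d hd (extendChain v) (kChainHom_extendChain dg hv)
    (isKCycle_extendChain f hcyc)
  set w := homogeneousPart dg d w₀
  have hw : koszulD f i w = extendChain v := by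
    rw [koszulD_homogeneousPart f hf, hw₀,
      homogeneousPart_of_kChainHom (kChainHom_extendChain dg hv)]
  obtain ⟨c, hc⟩ : ∃ c, koszulD (fun k => f k.castSucc) i c = chainWithLast w := by
    by_cases hle : dg (Fin.last m) ≤ d
    · exact IH _ (by omega) (by omega) _ (kChainHom_chainWithLast_homogeneousPart dg d w₀)
        (isKCycle_chainWithLast f hw)
    · exact ⟨0, by rw [koszulD_zero, chainWithLast_homogeneousPart_of_lt dg (not_le.1 hle)]⟩
  refine ⟨chainWithoutLast w + ((-1) ^ i * f (Fin.last m)) • c, ?_⟩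
  rw [koszulD_add_smul, hc, ← chainWithoutLast_koszulD, hw, chainWithoutLast_extendChain]

theorem koszulHVanish_castLE {M : ℕ} (f : Fin M → MvPolynomial σ K) (dg : Fin M → ℕ)
    (hf : ∀ j, (f j).IsHomogeneous (dg j)) (hdg : ∀ j, 0 < dg j) {i D : ℕ}
    (hvan : ∀ d ≤ D, KoszulHVanish f dg i d) {j : ℕ} (hj : j ≤ M) (d : ℕ) (hd : d ≤ D) :
    KoszulHVanish (fun k : Fin j => f (Fin.castLE hj k)) (fun k : Fin j => dg (Fin.castLE hj k))
      i d := by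
  induction hj using Nat.decreasingInduction generalizing d with
  | self => exact hvan d hd
  | of_succ _ _ ih => exact koszulHVanish_castSucc _ _ (fun _ => hf _) (hdg _) ih d hd

end GBPaper

open GBPaper

/-- if the degree-`≤ D` part of the `i`-th Koszul homology of
`(f_1,…,f_M)` vanishes, then so does that of `(f_1,…,f_j)` for every `1 ≤ j < M`. -/
theorem stmt9 {K : Type*} [Field K] {n M : ℕ}
    (f : Fin M → MvPolynomial (Fin n) K) (dg : Fin M → ℕ)
    (hhom : ∀ i, (f i).IsHomogeneous (dg i)) (hpos : ∀ i, 0 < dg i)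
    (D i : ℕ)
    (hvan : ∀ d : ℕ, d ≤ D → KoszulHVanish f dg i d) :
    ∀ j : ℕ, 1 ≤ j → (hj : j < M) → ∀ d : ℕ, d ≤ D →
      KoszulHVanish (fun k : Fin j => f (Fin.castLE hj.le k))
        (fun k : Fin j => dg (Fin.castLE hj.le k)) i d := by
  intro j _ hj d hd
  exact koszulHVanish_castLE f dg hhom hpos hvan hj.le d hd
end
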